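/- arXiv:1810.04397 — 8 statements merged into one kernel-verified Lean document; each statement's English description precedes it below -/
import Mathlib

section
/- Let u_1, …, u_k, v_1, …, v_k be pairwise distinct vertices of a finite simple graph G, and let X = {{u_1,v_1}, …, {u_k,v_k}}. Then X is a pairing dominating set of G if and only if every set {x_1, …, x_k} with x_i ∈ {u_i, v_i} for each i ∈ {1,…,k} is a dominating set of G. -/
variable {V : Type*}

/-- `D` dominates every vertex of `G` outside of `A`: each such vertex lies in the
closed neighborhood of some member of `D`. (Take `A = ∅` for ordinary domination.) -/
def Dominates (G : SimpleGraph V) (A : Set V) (D : Finset V) : Prop :=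
  ∀ v : V, v ∉ A → ∃ u ∈ D, u = v ∨ G.Adj u v

/-!
Fix a vertex `w` and call a vertex good if `w` lies in its closed neighborhood. Some pair has
both members good iff every choice of one member from each pair contains a good vertex: if no
pair is entirely good, choosing a bad member from each pair gives a choice with no good vertex.
Quantifying over `w` turns the left side into the pairing condition and the right side into
domination by every choice.
-/

theorem exists_and_iff_forall_choice {ι α : Type*} (u v : ι → α) (P : α → Prop) :
    (∃ i, P (u i) ∧ P (v i)) ↔
      ∀ x : ι → α, (∀ i, x i = u i ∨ x i = v i) → ∃ i, P (x i) := by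
  classical
  constructor
  · rintro ⟨i, hu, hv⟩ x hx
    exact ⟨i, by rcases hx i with h | h <;> rw [h] <;> assumption⟩
  · intro h
    by_contra! hnone
    let bad : ι → α := fun i => if P (u i) then v i else u i
    obtain ⟨i, hi⟩ := h bad fun i => by by_cases hu : P (u i) <;> simp [bad, hu]
    by_cases hu : P (u i)
    · exact hnone i hu (by simpa only [bad, if_pos hu] using hi)
    · exact hu (by simpa only [bad, if_neg hu] using hi)

theorem dominates_empty_image_iff [DecidableEq V] {ι : Type*} [Fintype ι]
    (G : SimpleGraph V) (x : ι → V) :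
    Dominates G ∅ (Finset.univ.image x) ↔ ∀ w, ∃ i, x i = w ∨ G.Adj (x i) w := by
  simp [Dominates]

theorem pairing_dominating_set_iff_general [DecidableEq V] (G : SimpleGraph V)
    (k : ℕ) (u v : Fin k → V) :
    (∀ w : V, ∃ i : Fin k, (u i = w ∨ G.Adj (u i) w) ∧ (v i = w ∨ G.Adj (v i) w)) ↔
      (∀ x : Fin k → V, (∀ i : Fin k, x i = u i ∨ x i = v i) →
        Dominates G ∅ (Finset.univ.image x)) := by
  simp only [dominates_empty_image_iff]
  constructor
  · intro hpair x hx w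
    exact (exists_and_iff_forall_choice u v fun a => a = w ∨ G.Adj a w).mp (hpair w) x hx
  · intro hdom w
    exact (exists_and_iff_forall_choice u v fun a => a = w ∨ G.Adj a w).mpr
      fun x hx => hdom x hx w

/-- Let `u 1, …, u k, v 1, …, v k` be pairwise distinct vertices of a finite simple graph
`G`.  Then `X = {{u 1, v 1}, …, {u k, v k}}` is a pairing dominating set of `G`
(i.e. the closed neighborhoods `N[u i, v i] = N[u i] ∩ N[v i]` cover `V(G)`) if and only if
every set `{x 1, …, x k}` with `x i ∈ {u i, v i}` for each `i` is a dominating set of `G`. -/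
theorem pairing_dominating_set_iff [Fintype V] [DecidableEq V] (G : SimpleGraph V)
    (k : ℕ) (u v : Fin k → V) (hdist : Function.Injective (Sum.elim u v)) :
    (∀ w : V, ∃ i : Fin k, (u i = w ∨ G.Adj (u i) w) ∧ (v i = w ∨ G.Adj (v i) w)) ↔
      (∀ x : Fin k → V, (∀ i : Fin k, x i = u i ∨ x i = v i) →
        Dominates G ∅ (Finset.univ.image x)) :=
  pairing_dominating_set_iff_general G k u v
end

section
/- (Continuation Principle) Let G be a finite simple graph and A, B ⊆ V(G). If B ⊆ A, then γ_MB(G|A) ≤ γ_MB(G|B) and γ_MB'(G|A) ≤ γ_MB'(G|B). -/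
variable {V : Type*}

/-- `MBWin G A t k D S`: in the Maker-Breaker domination game on `G` where the vertices of
`A` are regarded as already dominated, with `D` the set of vertices selected so far by
Dominator, `S` the set selected so far by Staller, and where it is Dominator's turn if
`t = true` and Staller's turn if `t = false`, Dominator has a strategy guaranteeing that
his selected vertices dominate `V \ A` after he selects at most `k` further vertices.
Players alternately select vertices not previously selected by either player; if no
unselected vertex remains and Dominator's vertices do not dominate, Dominator has lost. -/
inductive MBWin [Fintype V] [DecidableEq V] (G : SimpleGraph V) (A : Set V) :
    Bool → ℕ → Finset V → Finset V → Prop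
  | win (t : Bool) (k : ℕ) (D S : Finset V) : Dominates G A D → MBWin G A t k D S
  | dmove (k : ℕ) (D S : Finset V) (v : V) : v ∉ D → v ∉ S →
      MBWin G A false k (insert v D) S → MBWin G A true (k + 1) D S
  | smove (k : ℕ) (D S : Finset V) : D ∪ S ≠ Finset.univ →
      (∀ v, v ∉ D → v ∉ S → MBWin G A true k D (insert v S)) → MBWin G A false k D S

/-- The Maker-Breaker domination number `γ_MB(G|A)` of the game in which the vertices of `A`
are regarded as already dominated and Dominator moves first: the minimum `m` such that
Dominator has a winning strategy using at most `m` of his own moves, and `⊤ = ∞` if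
Dominator has no winning strategy. -/
noncomputable def gammaMBRes [Fintype V] [DecidableEq V] (G : SimpleGraph V) (A : Set V) :
    ℕ∞ :=
  sInf ((fun m : ℕ => (m : ℕ∞)) '' {m : ℕ | MBWin G A true m ∅ ∅})

/-- `γ_MB'(G|A)`: as `gammaMBRes`, but Staller moves first. -/
noncomputable def gammaMBRes' [Fintype V] [DecidableEq V] (G : SimpleGraph V) (A : Set V) :
    ℕ∞ :=
  sInf ((fun m : ℕ => (m : ℕ∞)) '' {m : ℕ | MBWin G A false m ∅ ∅})

/-- The Maker-Breaker domination number `γ_MB(G)` (Dominator moves first). -/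
noncomputable def gammaMB [Fintype V] [DecidableEq V] (G : SimpleGraph V) : ℕ∞ :=
  gammaMBRes G ∅

/-- The Staller-start Maker-Breaker domination number `γ_MB'(G)`. -/
noncomputable def gammaMB' [Fintype V] [DecidableEq V] (G : SimpleGraph V) : ℕ∞ :=
  gammaMBRes' G ∅

/-- The domination number `γ(G)`: the minimum size of a dominating set of `G`. -/
noncomputable def dominationNumber [Fintype V] (G : SimpleGraph V) : ℕ :=
  sInf {m : ℕ | ∃ D : Finset V, Dominates G ∅ D ∧ D.card = m}

/-- A `γ`-set of `G`: a dominating set of minimum size. -/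
def IsGammaSet [Fintype V] (G : SimpleGraph V) (D : Finset V) : Prop :=
  Dominates G ∅ D ∧ D.card = dominationNumber G

theorem Dominates.mono_set {G : SimpleGraph V} {A B : Set V} {D : Finset V} (hBA : B ⊆ A)
    (h : Dominates G B D) : Dominates G A D :=
  fun v hvA => h v (fun hvB => hvA (hBA hvB))

theorem MBWin.mono_set [Fintype V] [DecidableEq V] {G : SimpleGraph V} {A B : Set V}
    (hBA : B ⊆ A) {t : Bool} {k : ℕ} {D S : Finset V} (h : MBWin G B t k D S) :
    MBWin G A t k D S := by
  induction h with
  | win t k D S hdom => exact .win t k D S (hdom.mono_set hBA)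
  | dmove k D S v hvD hvS _ ih => exact .dmove k D S v hvD hvS ih
  | smove k D S hfree _ ih => exact .smove k D S hfree ih

/-- (Continuation Principle)  Let `G` be a finite simple graph and `A, B ⊆ V(G)`.
If `B ⊆ A`, then `γ_MB(G|A) ≤ γ_MB(G|B)` and `γ_MB'(G|A) ≤ γ_MB'(G|B)`. -/
theorem continuation_principle [Fintype V] [DecidableEq V] (G : SimpleGraph V)
    (A B : Set V) (hBA : B ⊆ A) :
    gammaMBRes G A ≤ gammaMBRes G B ∧ gammaMBRes' G A ≤ gammaMBRes' G B :=
  ⟨sInf_le_sInf (Set.image_mono fun _ => MBWin.mono_set hBA),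
    sInf_le_sInf (Set.image_mono fun _ => MBWin.mono_set hBA)⟩
end

section
/- For all integers r, s, t with 2 ≤ r ≤ s ≤ t, there exists a finite simple graph G such that γ(G) = r, γ_MB(G) = s, and γ_MB'(G) = t. -/
variable {V : Type*}

/-!
`hubPairGraph owner` has two adjacent hubs `inl false`, `inl true` and, for each `i`, an edge
(a pair) `inr (i, false) — inr (i, true)`, joined completely to hub `b` if `owner i = some b` and
isolated if `owner i = none`. With `a ≤ c` pairs at the hubs `false`, `true` and `k` isolated
pairs, `γ = k + 2`, `γ_MB = a + k + 1` and `γ_MB' = c + k + 1`; take `a = s - r + 1`,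
`c = t - r + 1`, `k = r - 2`.

Once Dominator holds hub `b`, he still needs one vertex in every pair not at `b`, which a pairing
strategy secures. In the S-game he answers Staller's hub (or a vertex of a pair at hub `b`) with
the other hub (with hub `b`), and a move in an isolated pair with its partner. Conversely, once
Staller holds hub `b`, the closed neighbourhoods of hub `!b` and of the pairs not at `!b` become
disjoint after removing hub `b`, so Dominator needs a vertex in each of them.
-/

open Finset

theorem Dominates.mono {G : SimpleGraph V} {A : Set V} {D D' : Finset V} (hD : Dominates G A D)
    (hDD' : D ⊆ D') : Dominates G A D' := fun v hv =>
  let ⟨u, hu, huv⟩ := hD v hv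
  ⟨u, hDD' hu, huv⟩

/-- Packing bound: `hX` says that the sets `N[x] \ F`, `x ∈ X`, are pairwise disjoint. -/
theorem card_le_card_of_dominates {G : SimpleGraph V} {A : Set V} {D F X : Finset V}
    (hD : Dominates G A D) (hDF : Disjoint D F) (hXA : ∀ x ∈ X, x ∉ A)
    (hX : ∀ x ∈ X, ∀ y ∈ X, ∀ u ∉ F,
      (u = x ∨ G.Adj u x) → (u = y ∨ G.Adj u y) → x = y) :
    #X ≤ #D := by
  choose! f hfD hfx using fun x (hx : x ∈ X) => hD x (hXA x hx)
  refine card_le_card_of_injOn f (fun x hx => hfD x hx) fun x hx y hy hxy => ?_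
  exact hX x hx y hy (f x) (disjoint_left.1 hDF (hfD x hx)) (hfx x hx) (hxy ▸ hfx y hy)

section Game

variable [Fintype V] [DecidableEq V] {G : SimpleGraph V} {A : Set V}

theorem MBWin.mono {t : Bool} {k k' : ℕ} {D S : Finset V} (h : MBWin G A t k D S)
    (hkk' : k ≤ k') : MBWin G A t k' D S := by
  induction h generalizing k' with
  | win t k D S hD => exact .win _ _ _ _ hD
  | dmove k D S v hvD hvS _ ih =>
    obtain ⟨k', rfl⟩ : ∃ k'', k' = k'' + 1 := ⟨k' - 1, by omega⟩
    exact .dmove _ _ _ v hvD hvS (ih (by omega))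
  | smove k D S hne _ ih => exact .smove _ _ _ hne fun v hvD hvS => ih v hvD hvS hkk'

theorem MBWin.staller_move {k : ℕ} {D S : Finset V} {v : V} (h : MBWin G A false k D S)
    (hvD : v ∉ D) (hvS : v ∉ S) : MBWin G A true k D (insert v S) := by
  cases h with
  | win _ _ _ _ hD => exact .win _ _ _ _ hD
  | smove _ _ _ _ hnext => exact hnext v hvD hvS

/-- `E` collects Dominator's remaining moves against an arbitrary play of Staller. -/
theorem MBWin.exists_dominates_union {t : Bool} {k : ℕ} {D S : Finset V}
    (h : MBWin G A t k D S) :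
    ∃ E : Finset V, Disjoint E S ∧ #E ≤ k ∧ Dominates G A (D ∪ E) := by
  induction h with
  | win t k D S hD => exact ⟨∅, disjoint_empty_left _, by simp, by simpa using hD⟩
  | dmove k D S v _ hvS _ ih =>
    obtain ⟨E, hES, hEk, hdom⟩ := ih
    refine ⟨insert v E, disjoint_insert_left.2 ⟨hvS, hES⟩,
      (card_insert_le _ _).trans (by omega), ?_⟩
    rwa [union_insert, ← insert_union]
  | smove k D S hne _ ih =>
    obtain ⟨v, hv⟩ : ∃ v, v ∉ D ∪ S := by
      by_contra! h
      exact hne (eq_univ_of_forall h)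
    obtain ⟨E, hES, hEk, hdom⟩ := ih v (fun h => hv (mem_union_left _ h))
      (fun h => hv (mem_union_right _ h))
    exact ⟨E, disjoint_of_subset_right (subset_insert _ _) hES, hEk, hdom⟩

/-- Pairing strategy: Dominator answers in the pair Staller has just entered, or in any pair if
she entered none. -/
theorem MBWin.of_pairing {ι : Type*} [DecidableEq ι] {p : ι × Bool → V} (hp : p.Injective)
    (s : Finset ι) {D S : Finset V} (hfree : ∀ i ∈ s, ∀ c, p (i, c) ∉ D ∧ p (i, c) ∉ S)
    (hdom : ∀ f : ι → Bool, Dominates G A (D ∪ s.image fun i => p (i, f i))) :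
    MBWin G A false #s D S := by
  induction s using Finset.strongInduction generalizing D S with
  | H s ih =>
  obtain rfl | ⟨i₀, hi₀⟩ := s.eq_empty_or_nonempty
  · exact .win _ _ _ _ (by simpa using hdom default)
  refine .smove _ D S (fun h => ?_) fun v hvD hvS => ?_
  · obtain h | h := mem_union.1 (h ▸ mem_univ (p (i₀, false)))
    exacts [(hfree i₀ hi₀ false).1 h, (hfree i₀ hi₀ false).2 h]
  obtain ⟨j, hj, e, hvj, hvs⟩ :
      ∃ j ∈ s, ∃ e, v ≠ p (j, e) ∧ ∀ i ∈ s.erase j, ∀ c, v ≠ p (i, c) := by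
    by_cases hv : ∃ j ∈ s, ∃ d, v = p (j, d)
    · obtain ⟨j, hj, d, rfl⟩ := hv
      refine ⟨j, hj, !d, fun h => ?_, fun i hi c h => ?_⟩
      · simpa using congrArg Prod.snd (hp h)
      · exact (ne_of_mem_erase hi) (congrArg Prod.fst (hp h)).symm
    · push Not at hv
      exact ⟨i₀, hi₀, false, hv i₀ hi₀ false, fun i hi => hv i (mem_of_mem_erase hi)⟩
  rw [← card_erase_add_one hj]
  refine .dmove _ D _ (p (j, e)) (hfree j hj e).1 ?_ (ih _ (erase_ssubset hj) ?_ fun f => ?_)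
  · simp [hvj.symm, (hfree j hj e).2]
  · intro i hi c
    have hij : p (i, c) ≠ p (j, e) := fun h => ne_of_mem_erase hi (congrArg Prod.fst (hp h))
    simp [hij, (hvs i hi c).symm, hfree i (mem_of_mem_erase hi) c]
  · refine (hdom (Function.update f j e)).mono fun x hx => ?_
    simp only [mem_union, mem_insert, mem_image, mem_erase] at hx ⊢
    obtain hx | ⟨i, hi, rfl⟩ := hx
    · exact Or.inl (Or.inr hx)
    by_cases hij : i = j
    · subst hij; simp
    · exact Or.inr ⟨i, ⟨hij, hi⟩, by simp [hij]⟩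

end Game

section HubPairGraph

variable {I : Type} (owner : I → Option Bool)

def hubPairGraph : SimpleGraph (Bool ⊕ I × Bool) where
  Adj x y :=
    match x, y with
    | .inl a, .inl b => a ≠ b
    | .inl a, .inr (i, _) => owner i = some a
    | .inr (i, _), .inl a => owner i = some a
    | .inr (i, c), .inr (j, d) => i = j ∧ c ≠ d
  symm := ⟨by
    rintro (a | ⟨i, c⟩) (b | ⟨j, d⟩) h
    exacts [Ne.symm h, h, h, ⟨h.1.symm, h.2.symm⟩]⟩
  loopless := ⟨by
    rintro (a | ⟨i, c⟩) h
    exacts [h rfl, h.2 rfl]⟩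

variable {owner}

@[simp] theorem hubPairGraph_adj_inl_inl {a b : Bool} :
    (hubPairGraph owner).Adj (.inl a) (.inl b) ↔ a ≠ b := Iff.rfl

@[simp] theorem hubPairGraph_adj_inl_inr {a : Bool} {i : I} {c : Bool} :
    (hubPairGraph owner).Adj (.inl a) (.inr (i, c)) ↔ owner i = some a := Iff.rfl

@[simp] theorem hubPairGraph_adj_inr_inl {a : Bool} {i : I} {c : Bool} :
    (hubPairGraph owner).Adj (.inr (i, c)) (.inl a) ↔ owner i = some a := Iff.rfl

@[simp] theorem hubPairGraph_adj_inr_inr {i j : I} {c d : Bool} :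
    (hubPairGraph owner).Adj (.inr (i, c)) (.inr (j, d)) ↔ i = j ∧ c ≠ d := Iff.rfl

theorem hubPairGraph_dominates {D : Finset (Bool ⊕ I × Bool)} {b : Bool} (hb : .inl b ∈ D)
    (hpairs : ∀ i, (∃ b', owner i = some b' ∧ .inl b' ∈ D) ∨ ∃ c, .inr (i, c) ∈ D) :
    Dominates (hubPairGraph owner) ∅ D := by
  rintro (b' | ⟨i, c⟩) -
  · exact ⟨_, hb, by by_cases h : b = b' <;> simp [h]⟩
  · obtain ⟨b', hi, hb'⟩ | ⟨c', hc'⟩ := hpairs i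
    · exact ⟨_, hb', by simp [hi]⟩
    · exact ⟨_, hc', by by_cases h : c' = c <;> simp [h]⟩

variable [Fintype I] [DecidableEq I]

variable (owner) in
def pairsAt (o : Option Bool) : Finset I := univ.filter (owner · = o)

theorem card_pairsAt_union {o o' : Option Bool} (h : o ≠ o') :
    #(pairsAt owner o ∪ pairsAt owner o') = #(pairsAt owner o) + #(pairsAt owner o') :=
  card_union_of_disjoint (disjoint_filter.2 fun _ _ (h₁ : _ = o) h₂ => h (h₁.symm.trans h₂))

theorem le_card_of_dominates_hubPairGraph {D : Finset (Bool ⊕ I × Bool)}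
    (hD : Dominates (hubPairGraph owner) ∅ D) {i₀ i₁ : I} (hi₀ : owner i₀ = some false)
    (hi₁ : owner i₁ = some true) : #(pairsAt owner none) + 2 ≤ #D := by
  have hX : #((insert i₀ (insert i₁ (pairsAt owner none))).image
      fun i => (.inr (i, false) : Bool ⊕ I × Bool)) = #(pairsAt owner none) + 2 := by
    rw [card_image_of_injective _ fun i j h => by simpa using h, card_insert_of_notMem,
      card_insert_of_notMem] <;> simp [pairsAt, hi₀, hi₁]
    rintro rfl
    simp_all
  -- the vertices `inr (i, false)` have pairwise disjoint closed neighbourhoods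
  refine hX.symm.trans_le (card_le_card_of_dominates hD (disjoint_empty_right D) (by simp) ?_)
  simp only [mem_image, mem_insert, pairsAt, mem_filter, mem_univ, true_and]
  rintro _ ⟨i, hi, rfl⟩ _ ⟨j, hj, rfl⟩ (b | ⟨k, c⟩) - hui huj
  · simp only [hubPairGraph_adj_inl_inr, reduceCtorEq, false_or] at hui huj
    rcases hi with rfl | rfl | hi <;> rcases hj with rfl | rfl | hj <;> simp_all
  · aesop

theorem le_card_of_dominates_hubPairGraph_of_inl_notMem {D : Finset (Bool ⊕ I × Bool)}
    (hD : Dominates (hubPairGraph owner) ∅ D) {b : Bool} (hb : .inl b ∉ D) :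
    #(pairsAt owner (some b)) + #(pairsAt owner none) + 1 ≤ #D := by
  have hX : #(insert (.inl !b) ((pairsAt owner (some b) ∪ pairsAt owner none).image
      fun i => (.inr (i, false) : Bool ⊕ I × Bool))) =
      #(pairsAt owner (some b)) + #(pairsAt owner none) + 1 := by
    rw [card_insert_of_notMem (by simp), card_image_of_injective _ fun i j h => by simpa using h,
      card_pairsAt_union (by simp)]
  refine hX.symm.trans_le
    (card_le_card_of_dominates hD (disjoint_singleton_right.2 hb) (by simp) ?_)
  simp only [mem_insert, mem_image, mem_union, pairsAt, mem_filter, mem_univ, true_and,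
    mem_singleton]
  rintro x hx y hy (b' | ⟨k, c⟩) hu hux huy
  · rcases hx with rfl | ⟨i, hi, rfl⟩ <;> rcases hy with rfl | ⟨j, hj, rfl⟩ <;>
      cases b <;> cases b' <;> simp_all
  · rcases hx with rfl | ⟨i, hi, rfl⟩ <;> rcases hy with rfl | ⟨j, hj, rfl⟩ <;> aesop

theorem dominationNumber_hubPairGraph {i₀ i₁ : I} (hi₀ : owner i₀ = some false)
    (hi₁ : owner i₁ = some true) :
    dominationNumber (hubPairGraph owner) = #(pairsAt owner none) + 2 := by
  refine IsLeast.csInf_eq ⟨⟨insert (.inl false) (insert (.inl true)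
    ((pairsAt owner none).image fun i => .inr (i, true))), ?_, ?_⟩, ?_⟩
  · refine hubPairGraph_dominates (b := true) (by simp) fun i => ?_
    cases h : owner i with
    | none => exact Or.inr ⟨true, by simp [pairsAt, h]⟩
    | some b => exact Or.inl ⟨b, rfl, by cases b <;> simp⟩
  · rw [card_insert_of_notMem (by simp), card_insert_of_notMem (by simp),
      card_image_of_injective _ fun i j h => by simpa using h]
  · rintro _ ⟨D, hD, rfl⟩
    exact le_card_of_dominates_hubPairGraph hD hi₀ hi₁

theorem mbwin_true_hubPairGraph (b : Bool) :
    MBWin (hubPairGraph owner) ∅ true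
      (#(pairsAt owner (some !b)) + #(pairsAt owner none) + 1) ∅ ∅ := by
  refine .dmove _ _ _ (.inl b) (notMem_empty _) (notMem_empty _) ?_
  rw [← card_pairsAt_union (by simp)]
  refine .of_pairing Sum.inr_injective _ (by simp) fun f =>
    hubPairGraph_dominates (b := b) (by simp) fun i => ?_
  cases h : owner i with
  | none => exact Or.inr ⟨f i, by simp [pairsAt, h]⟩
  | some b' =>
    by_cases hb' : b' = b
    · exact Or.inl ⟨b', rfl, by simp [hb']⟩
    · exact Or.inr ⟨f i, by simp [pairsAt, h, Bool.eq_not.2 hb']⟩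

theorem le_of_mbwin_true_hubPairGraph
    (hle : #(pairsAt owner (some false)) ≤ #(pairsAt owner (some true))) {k : ℕ}
    (h : MBWin (hubPairGraph owner) ∅ true k ∅ ∅) :
    #(pairsAt owner (some false)) + #(pairsAt owner none) + 1 ≤ k := by
  rcases h with ⟨-, -, -, -, hD⟩ | ⟨k, -, -, v, -, -, h⟩
  · simpa using hD (.inl true)
  -- Staller answers with a hub not taken by Dominator
  obtain ⟨b, hbv, hb⟩ : ∃ b, .inl b ≠ v ∧
      #(pairsAt owner (some false)) ≤ #(pairsAt owner (some b)) := by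
    by_cases hv : v = .inl true
    exacts [⟨false, by simp [hv], le_rfl⟩, ⟨true, Ne.symm hv, hle⟩]
  obtain ⟨E, hES, hEk, hD⟩ :=
    (h.staller_move (by simpa using hbv) (notMem_empty _)).exists_dominates_union
  have hDE := le_card_of_dominates_hubPairGraph_of_inl_notMem hD (b := b)
    (by simpa [hbv] using disjoint_left.1 hES.symm (mem_singleton_self _))
  have := card_union_le (insert v ∅) E
  simp only [card_insert_of_notMem (notMem_empty v), card_empty] at this
  omega

theorem gammaMB_hubPairGraph
    (hle : #(pairsAt owner (some false)) ≤ #(pairsAt owner (some true))) :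
    gammaMB (hubPairGraph owner) =
      ↑(#(pairsAt owner (some false)) + #(pairsAt owner none) + 1) :=
  (Nat.mono_cast.map_isLeast ⟨mbwin_true_hubPairGraph true,
    fun _ => le_of_mbwin_true_hubPairGraph hle⟩).csInf_eq

theorem le_of_mbwin_false_hubPairGraph (b : Bool) {k : ℕ}
    (h : MBWin (hubPairGraph owner) ∅ false k ∅ ∅) :
    #(pairsAt owner (some b)) + #(pairsAt owner none) + 1 ≤ k := by
  obtain ⟨E, hES, hEk, hD⟩ :=
    (h.staller_move (v := .inl b) (notMem_empty _) (notMem_empty _)).exists_dominates_union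
  have := le_card_of_dominates_hubPairGraph_of_inl_notMem (by simpa using hD)
    (disjoint_left.1 hES.symm (mem_singleton_self _))
  omega

end HubPairGraph

section PairedPosition

variable {I : Type} [DecidableEq I] {owner : I → Option Bool}

variable (owner) in
/-- Positions of Dominator's strategy in the S-game, Staller to move; `T` holds the isolated pairs
nobody has entered yet. -/
def IsPairedPosition (T : Finset I) (D S : Finset (Bool ⊕ I × Bool)) : Prop :=
  (∀ i ∈ T, owner i = none) ∧
  (∀ x ∈ D ∪ S, ∃ i ∉ T, owner i = none ∧ ∃ c, x = .inr (i, c)) ∧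
  ∀ i ∉ T, owner i = none → ∃ c, .inr (i, c) ∈ D

namespace IsPairedPosition

variable {T : Finset I} {D S : Finset (Bool ⊕ I × Bool)}

theorem inl_notMem (h : IsPairedPosition owner T D S) (b : Bool) : .inl b ∉ D ∪ S :=
  fun hb => by
    obtain ⟨_, -, -, _, hc⟩ := h.2.1 _ hb
    cases hc

theorem inr_notMem (h : IsPairedPosition owner T D S) {i : I} (hi : i ∈ T ∨ owner i ≠ none)
    (c : Bool) : .inr (i, c) ∉ D ∪ S := fun hic => by
  obtain ⟨j, hj, hjo, c', hc'⟩ := h.2.1 _ hic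
  obtain ⟨rfl, -⟩ := Prod.mk.inj (Sum.inr.inj hc')
  exact hi.elim hj (· hjo)

theorem erase (h : IsPairedPosition owner T D S) {i : I} (hi : i ∈ T) (e : Bool) :
    IsPairedPosition owner (T.erase i) (insert (.inr (i, !e)) D) (insert (.inr (i, e)) S) := by
  obtain ⟨hT, hDS, hsettled⟩ := h
  refine ⟨fun j hj => hT j (mem_of_mem_erase hj), fun x hx => ?_, fun j hj hjo => ?_⟩
  · have hx' : x = .inr (i, !e) ∨ x = .inr (i, e) ∨ x ∈ D ∪ S := by
      simp only [mem_union, mem_insert] at hx ⊢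
      tauto
    obtain rfl | rfl | hx := hx'
    · exact ⟨i, notMem_erase i T, hT i hi, _, rfl⟩
    · exact ⟨i, notMem_erase i T, hT i hi, _, rfl⟩
    · obtain ⟨j, hj, hjo, c, rfl⟩ := hDS x hx
      exact ⟨j, fun h => hj (mem_of_mem_erase h), hjo, c, rfl⟩
  · by_cases hji : j = i
    · exact ⟨!e, by simp [hji]⟩
    · obtain ⟨c, hc⟩ := hsettled j (fun h => hj (mem_erase.2 ⟨hji, h⟩)) hjo
      exact ⟨c, mem_insert_of_mem hc⟩

variable [Fintype I]

/-- After Staller's move `v` and Dominator's answer, the hub `b`, Dominator needs exactly one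
vertex in each pair of `T` and each pair at hub `!b`, and `v` lies in none of them. -/
theorem mbwin_insert_inl (h : IsPairedPosition owner T D S) {b : Bool} {v : Bool ⊕ I × Bool}
    (hvT : ∀ i ∈ T, ∀ c, v ≠ .inr (i, c)) (hvb : v ≠ .inl b)
    (hv : ∀ i c, v = .inr (i, c) → owner i ≠ some !b) :
    MBWin (hubPairGraph owner) ∅ false #(T ∪ pairsAt owner (some !b))
      (insert (.inl b) D) (insert v S) := by
  refine .of_pairing Sum.inr_injective _ (fun i hi c => ?_) fun f => ?_
  · simp only [mem_union, pairsAt, mem_filter, mem_univ, true_and] at hi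
    have hvi : v ≠ .inr (i, c) := by
      rintro rfl
      exact hi.elim (hvT i · c rfl) (hv i c rfl)
    have := h.inr_notMem (hi.imp_right fun hi => by simp [hi]) c
    simp only [mem_union, not_or] at this
    simp [hvi.symm, this]
  refine hubPairGraph_dominates (b := b) (by simp) fun i => ?_
  cases hio : owner i with
  | none =>
    by_cases hi : i ∈ T
    · exact Or.inr ⟨f i, by simp [hi]⟩
    · obtain ⟨c, hc⟩ := h.2.2 i hi hio
      exact Or.inr ⟨c, by simp [hc]⟩
  | some b' =>
    by_cases hb' : b' = b
    · exact Or.inl ⟨b', rfl, by simp [hb']⟩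
    · exact Or.inr ⟨f i, by simp [pairsAt, hio, Bool.eq_not.2 hb']⟩

theorem mbwin {n : ℕ} (hn : ∀ b, #(pairsAt owner (some b)) ≤ n)
    (h : IsPairedPosition owner T D S) :
    MBWin (hubPairGraph owner) ∅ false (n + 1 + #T) D S := by
  induction T using Finset.strongInduction generalizing D S with
  | H T ih =>
  refine .smove _ D S (fun hDS => h.inl_notMem true (hDS ▸ mem_univ _)) fun v hvD hvS => ?_
  by_cases hvT : ∃ i ∈ T, ∃ e, v = .inr (i, e)
  · obtain ⟨i, hi, e, rfl⟩ := hvT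
    have hfree := h.inr_notMem (Or.inl hi)
    rw [← card_erase_add_one hi, ← add_assoc]
    refine .dmove _ D _ (.inr (i, !e)) (fun h => hfree _ (mem_union_left _ h)) ?_
      (ih _ (erase_ssubset hi) (h.erase hi e))
    simpa using fun h => hfree _ (mem_union_right _ h)
  push Not at hvT
  obtain ⟨b, hvb, hv⟩ :
      ∃ b, v ≠ .inl b ∧ ∀ i c, v = .inr (i, c) → owner i ≠ some !b := by
    rcases v with b | ⟨i, c⟩
    · exact ⟨!b, by simp, by simp⟩
    · cases hio : owner i with
      | none => exact ⟨true, by simp, by simp_all⟩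
      | some b => exact ⟨b, by simp, by simp_all⟩
  have hcard : #(T ∪ pairsAt owner (some !b)) + 1 ≤ n + 1 + #T := by
    have := card_union_le T (pairsAt owner (some !b))
    have := hn (!b)
    omega
  have hhub := h.inl_notMem b
  refine (MBWin.dmove _ D _ (.inl b) (fun h => hhub (mem_union_left _ h)) ?_
    (h.mbwin_insert_inl hvT hvb hv)).mono hcard
  simpa [Ne.symm hvb] using fun h => hhub (mem_union_right _ h)

end IsPairedPosition

theorem gammaMB'_hubPairGraph [Fintype I]
    (hle : #(pairsAt owner (some false)) ≤ #(pairsAt owner (some true))) :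
    gammaMB' (hubPairGraph owner) =
      ↑(#(pairsAt owner (some true)) + #(pairsAt owner none) + 1) := by
  have hn : ∀ b, #(pairsAt owner (some b)) ≤ #(pairsAt owner (some true)) := by
    rintro (_ | _)
    exacts [hle, le_rfl]
  have hstart : IsPairedPosition owner (pairsAt owner none) ∅ ∅ :=
    ⟨fun i hi => by simpa [pairsAt] using hi, by simp,
      fun i hi hio => by simp [pairsAt, hio] at hi⟩
  refine (Nat.mono_cast.map_isLeast
    ⟨?_, fun _ => le_of_mbwin_false_hubPairGraph true⟩).csInf_eq
  show MBWin _ _ _ _ _ _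
  rw [add_right_comm]
  exact hstart.mbwin hn

end PairedPosition

def sumOwner (a c k : ℕ) : Fin a ⊕ Fin c ⊕ Fin k → Option Bool :=
  Sum.elim (fun _ => some false) (Sum.elim (fun _ => some true) fun _ => none)

theorem card_pairsAt_sumOwner (a c k : ℕ) :
    #(pairsAt (sumOwner a c k) (some false)) = a ∧ #(pairsAt (sumOwner a c k) (some true)) = c ∧
      #(pairsAt (sumOwner a c k) none) = k := by
  refine ⟨?_, ?_, ?_⟩ <;>
  · rw [pairsAt, card_filter, Fintype.sum_sum_type, Fintype.sum_sum_type]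
    simp [sumOwner]

/-- For all integers `r, s, t` with `2 ≤ r ≤ s ≤ t`, there exists a finite simple graph `G`
such that `γ(G) = r`, `γ_MB(G) = s`, and `γ_MB'(G) = t`. -/
theorem realization_gamma_gammaMB_gammaMB' (r s t : ℕ) (h2 : 2 ≤ r) (hrs : r ≤ s)
    (hst : s ≤ t) :
    ∃ (W : Type) (iF : Fintype W) (iD : DecidableEq W) (G : SimpleGraph W),
      @dominationNumber W iF G = r ∧
      @gammaMB W iF iD G = (s : ℕ∞) ∧
      @gammaMB' W iF iD G = (t : ℕ∞) := by
  obtain ⟨ha, hc, hk⟩ := card_pairsAt_sumOwner (s - r + 1) (t - r + 1) (r - 2)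
  refine ⟨_, inferInstance, inferInstance,
    hubPairGraph (sumOwner (s - r + 1) (t - r + 1) (r - 2)), ?_, ?_, ?_⟩
  · rw [dominationNumber_hubPairGraph (i₀ := .inl 0) (i₁ := .inr (.inl 0)) rfl rfl, hk]
    omega
  · rw [gammaMB_hubPairGraph (by omega), ha, hk]
    congr 1
    omega
  · rw [gammaMB'_hubPairGraph (by omega), hc, hk]
    congr 1
    omega
end

section
/- If G is a finite simple graph and X_γ(G) < 2^{γ(G)−1}, where X_γ(G) denotes the number of γ-sets of G, then γ_MB(G) > γ(G). -/
variable {V : Type*}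

/-! Every leaf of a winning strategy for Dominator is a γ-set once the strategy is short enough
(at most `γ(G)` moves). Whenever Staller is to move, she can first play some `s` and see
Dominator's answer `v`, or instead play `v` herself: the γ-sets reachable in the two
continuations are disjoint, since those of the first contain `v` and those of the second avoid
it. Hence a strategy with `k` Staller turns left to survive reaches at least `2 ^ k` distinct
γ-sets, and a strategy winning the D-game in `γ(G)` moves reaches at least `2 ^ (γ(G) - 1)`. -/

section Domination

variable [Fintype V] {G : SimpleGraph V} {D T S : Finset V}

lemma dominationNumber_le_card (hT : Dominates G ∅ T) : dominationNumber G ≤ T.card :=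
  Nat.sInf_le ⟨T, hT, rfl⟩

def gammaSetsBetween (G : SimpleGraph V) (D S : Finset V) : Set (Finset V) :=
  {T | IsGammaSet G T ∧ D ⊆ T ∧ Disjoint T S}

@[simp]
lemma gammaSetsBetween_empty_empty (G : SimpleGraph V) :
    gammaSetsBetween G ∅ ∅ = {T | IsGammaSet G T} := by
  simp [gammaSetsBetween]

lemma one_le_ncard_gammaSetsBetween (hD : Dominates G ∅ D) (hDS : Disjoint D S)
    (hcard : D.card ≤ dominationNumber G) : 1 ≤ (gammaSetsBetween G D S).ncard :=
  (Set.ncard_pos (Set.toFinite _)).2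
    ⟨D, ⟨hD, le_antisymm hcard (dominationNumber_le_card hD)⟩, subset_rfl, hDS⟩

lemma gammaSetsBetween_anti {D' S' : Finset V} (hD : D ⊆ D') (hS : S ⊆ S') :
    gammaSetsBetween G D' S' ⊆ gammaSetsBetween G D S :=
  fun _ ⟨hT, hD'T, hTS'⟩ => ⟨hT, hD.trans hD'T, hTS'.mono_right hS⟩

lemma ncard_add_ncard_le_ncard_gammaSetsBetween [DecidableEq V] (s v w : V) :
    (gammaSetsBetween G (insert v D) (insert s S)).ncard
        + (gammaSetsBetween G (insert w D) (insert v S)).ncard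
      ≤ (gammaSetsBetween G D S).ncard := by
  have hdisj : Disjoint (gammaSetsBetween G (insert v D) (insert s S))
      (gammaSetsBetween G (insert w D) (insert v S)) :=
    Set.disjoint_left.2 fun _ ⟨_, hvT, _⟩ ⟨_, _, hTv⟩ =>
      Finset.disjoint_right.1 hTv (Finset.mem_insert_self v S) (hvT (Finset.mem_insert_self v D))
  rw [← Set.ncard_union_eq hdisj (Set.toFinite _) (Set.toFinite _)]
  exact Set.ncard_le_ncard (Set.union_subset
    (gammaSetsBetween_anti (Finset.subset_insert _ _) (Finset.subset_insert _ _))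
    (gammaSetsBetween_anti (Finset.subset_insert _ _) (Finset.subset_insert _ _)))
    (Set.toFinite _)

end Domination

namespace MBWin

variable [Fintype V] [DecidableEq V] {G : SimpleGraph V} {A : Set V} {t : Bool} {k : ℕ}
  {D S : Finset V}

lemma exists_move (h : MBWin G A true k D S) (hD : ¬ Dominates G A D) :
    ∃ k' v, k = k' + 1 ∧ v ∉ D ∧ v ∉ S ∧ MBWin G A false k' (insert v D) S := by
  cases h with
  | win _ _ _ _ hdom => exact absurd hdom hD
  | dmove k' _ _ v hvD hvS hw => exact ⟨k', v, rfl, hvD, hvS, hw⟩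

lemma exists_free_of_staller (h : MBWin G A false k D S) (hD : ¬ Dominates G A D) :
    ∃ s, s ∉ D ∧ s ∉ S := by
  cases h with
  | win _ _ _ _ hdom => exact absurd hdom hD
  | smove _ _ _ hne _ => simpa [Finset.eq_univ_iff_forall] using hne

lemma exists_reply (h : MBWin G A false k D S) (hD : ¬ Dominates G A D) {s : V}
    (hsD : s ∉ D) (hsS : s ∉ S) :
    ∃ k' v, k = k' + 1 ∧ v ∉ D ∧ v ∉ insert s S ∧
      MBWin G A false k' (insert v D) (insert s S) := by
  cases h with
  | win _ _ _ _ hdom => exact absurd hdom hD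
  | smove _ _ _ _ hall => exact (hall s hsD hsS).exists_move hD

lemma dominationNumber_le_card_add (h : MBWin G ∅ t k D S) :
    dominationNumber G ≤ D.card + k := by
  induction h with
  | win _ _ _ _ hD => exact (dominationNumber_le_card hD).trans (Nat.le_add_right _ _)
  | dmove _ _ _ _ hvD _ _ ih => rw [Finset.card_insert_of_notMem hvD] at ih; omega
  | smove _ D S hne _ ih =>
    obtain ⟨v, hvD, hvS⟩ : ∃ v, v ∉ D ∧ v ∉ S := by
      simpa [Finset.eq_univ_iff_forall] using hne
    exact ih v hvD hvS

lemma two_pow_le_ncard_gammaSetsBetween_of_staller (h : MBWin G ∅ false k D S)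
    (hDS : Disjoint D S) (hk : D.card + k ≤ dominationNumber G) :
    2 ^ k ≤ (gammaSetsBetween G D S).ncard := by
  induction k using Nat.strong_induction_on generalizing D S with
  | _ k ih =>
  by_cases hD : Dominates G ∅ D
  · have hk0 : k = 0 := by have := dominationNumber_le_card hD; omega
    subst hk0
    exact one_le_ncard_gammaSetsBetween hD hDS (by omega)
  obtain ⟨s, hsD, hsS⟩ := h.exists_free_of_staller hD
  obtain ⟨k', v, rfl, hvD, hvsS, hv⟩ := h.exists_reply hD hsD hsS
  obtain ⟨_, w, hk', hwD, hwvS, hw⟩ :=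
    h.exists_reply hD hvD fun hvS => hvsS (Finset.mem_insert_of_mem hvS)
  cases Nat.succ_injective hk'
  have hvs : Disjoint (insert v D) (insert s S) :=
    Finset.disjoint_insert_left.2 ⟨hvsS, Finset.disjoint_insert_right.2 ⟨hsD, hDS⟩⟩
  have hwv : Disjoint (insert w D) (insert v S) :=
    Finset.disjoint_insert_left.2 ⟨hwvS, Finset.disjoint_insert_right.2 ⟨hvD, hDS⟩⟩
  have hv_card := Finset.card_insert_of_notMem hvD
  have hw_card := Finset.card_insert_of_notMem hwD
  calc 2 ^ (k' + 1) = 2 ^ k' + 2 ^ k' := by ring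
    _ ≤ (gammaSetsBetween G (insert v D) (insert s S)).ncard
        + (gammaSetsBetween G (insert w D) (insert v S)).ncard :=
      add_le_add (ih k' k'.lt_succ_self hv hvs (by omega)) (ih k' k'.lt_succ_self hw hwv (by omega))
    _ ≤ (gammaSetsBetween G D S).ncard := ncard_add_ncard_le_ncard_gammaSetsBetween s v w

lemma two_pow_pred_le_ncard_gammaSetsBetween (h : MBWin G ∅ true k D S)
    (hDS : Disjoint D S) (hk : D.card + k ≤ dominationNumber G) :
    2 ^ (k - 1) ≤ (gammaSetsBetween G D S).ncard := by
  by_cases hD : Dominates G ∅ D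
  · have hk0 : k = 0 := by have := dominationNumber_le_card hD; omega
    subst hk0
    exact one_le_ncard_gammaSetsBetween hD hDS (by omega)
  obtain ⟨k', v, rfl, hvD, hvS, hv⟩ := h.exists_move hD
  calc 2 ^ (k' + 1 - 1) = 2 ^ k' := rfl
    _ ≤ (gammaSetsBetween G (insert v D) S).ncard :=
      hv.two_pow_le_ncard_gammaSetsBetween_of_staller
        (Finset.disjoint_insert_left.2 ⟨hvS, hDS⟩)
        (by rw [Finset.card_insert_of_notMem hvD]; omega)
    _ ≤ (gammaSetsBetween G D S).ncard :=
      Set.ncard_le_ncard (gammaSetsBetween_anti (Finset.subset_insert _ _) subset_rfl)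
        (Set.toFinite _)

end MBWin

lemma coe_lt_gammaMBRes [Fintype V] [DecidableEq V] {G : SimpleGraph V} {A : Set V} {n : ℕ}
    (h : ∀ m, MBWin G A true m ∅ ∅ → n < m) : (n : ℕ∞) < gammaMBRes G A :=
  (ENat.add_one_le_iff (ENat.natCast_ne_top n)).1 <| le_sInf <| by
    rintro _ ⟨m, hm, rfl⟩
    exact (ENat.add_one_le_iff (ENat.natCast_ne_top n)).2 (Nat.cast_lt.2 (h m hm))

/-- If `G` is a finite simple graph and the number `X_γ(G)` of `γ`-sets of `G` is less than
`2 ^ (γ(G) - 1)`, then `γ_MB(G) > γ(G)`. -/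
theorem gammaMB_gt_gamma_of_few_gamma_sets [Fintype V] [DecidableEq V] (G : SimpleGraph V)
    (h : Set.ncard {D : Finset V | IsGammaSet G D} < 2 ^ (dominationNumber G - 1)) :
    (dominationNumber G : ℕ∞) < gammaMB G := by
  refine coe_lt_gammaMBRes fun m hm => ?_
  by_contra! hmγ
  have hγ : dominationNumber G = m :=
    le_antisymm (by simpa using hm.dominationNumber_le_card_add) hmγ
  have hcount := hm.two_pow_pred_le_ncard_gammaSetsBetween (by simp) (by simpa using hmγ)
  rw [gammaSetsBetween_empty_empty, ← hγ] at hcount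
  omega
end

section
/- For every finite simple graph G, the residual graph R(G) is unique up to isomorphism; that is, any two graphs obtained from G by iteratively removing pendant P₂'s until none remains are isomorphic. -/
/-!
Removing pendant `P₂`'s terminates, and it is locally confluent up to isomorphism. Two removals
of pendant paths `x₁y₁` and `x₂y₂` either remove the same path, or commute, or overlap. If
they overlap, the two paths form a component of the current graph: the path `x₁ y x₂` when
`y₁ = y₂ = y`, or `x₁ y₁ y₂ x₂` when `y₁` and `y₂` are adjacent. Reflecting that component
is an automorphism that carries one result to the other. Isomorphism, realised by a permutation
of the vertices, is a simulation for the removal relation, so Newman's lemma modulo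
isomorphism shows that all terminal graphs are isomorphic.
-/

variable {V : Type*}

/-- `PendantStep G s t`: the induced subgraph of `G` on `t` is obtained from the induced
subgraph of `G` on `s` by removing a pendant `P₂` (a path `xy` on two vertices attached to
the rest of the graph by exactly one edge, so that `x` is a leaf and `y` has degree `2`),
or by removing the entire remaining graph when it is a single `P₂`. -/
def PendantStep [DecidableEq V] (G : SimpleGraph V) (s t : Finset V) : Prop :=
  (∃ x ∈ s, ∃ y ∈ s, G.Adj x y ∧
      (∀ w ∈ s, G.Adj x w → w = y) ∧
      (∃ z ∈ s, z ≠ x ∧ G.Adj y z ∧ ∀ w ∈ s, G.Adj y w → w = x ∨ w = z) ∧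
      t = (s.erase x).erase y) ∨
  (∃ x ∈ s, ∃ y ∈ s, G.Adj x y ∧ s = {x, y} ∧ t = ∅)

/-- `s` is the vertex set of a residual graph `R(G)` of `G`: it is obtained from the full
vertex set by iteratively removing pendant `P₂`'s until no such removal is possible. -/
def IsResidualSet [Fintype V] [DecidableEq V] (G : SimpleGraph V) (s : Finset V) : Prop :=
  Relation.ReflTransGen (PendantStep G) Finset.univ s ∧ ∀ t, ¬ PendantStep G s t

namespace Relation

variable {α : Type*} {r e : α → α → Prop}

theorem exists_reflTransGen_normal (hwf : WellFounded (flip r)) (a : α) :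
    ∃ n, ReflTransGen r a n ∧ ∀ b, ¬ r n b := by
  induction a using hwf.induction with
  | _ a ih =>
    by_cases h : ∃ b, r a b
    · obtain ⟨b, hab⟩ := h
      obtain ⟨n, hbn, hn⟩ := ih b hab
      exact ⟨n, .head hab hbn, hn⟩
    · exact ⟨a, .refl, fun b hab => h ⟨b, hab⟩⟩

theorem ReflTransGen.exists_of_simulation
    (hsim : ∀ a b a', e a b → r a a' → ∃ b', r b b' ∧ e a' b') {a b a' : α} (hab : e a b)
    (h : ReflTransGen r a a') : ∃ b', ReflTransGen r b b' ∧ e a' b' := by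
  induction h with
  | refl => exact ⟨b, .refl, hab⟩
  | tail _ hcd ih =>
    obtain ⟨c', hbc', hcc'⟩ := ih
    obtain ⟨d', hc'd', hdd'⟩ := hsim _ _ _ hcc' hcd
    exact ⟨d', hbc'.tail hc'd', hdd'⟩

/-- Newman's lemma modulo an equivalence `e` that is a simulation for `r`. -/
theorem equiv_of_normal_of_locallyConfluent_modulo (hwf : WellFounded (flip r))
    (he : Equivalence e) (hsim : ∀ a b a', e a b → r a a' → ∃ b', r b b' ∧ e a' b')
    (hlc : ∀ a b c, r a b → r a c →
      ∃ b' c', ReflTransGen r b b' ∧ ReflTransGen r c c' ∧ e b' c')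
    {a n₁ n₂ : α} (h₁ : ReflTransGen r a n₁) (hn₁ : ∀ b, ¬ r n₁ b)
    (h₂ : ReflTransGen r a n₂) (hn₂ : ∀ b, ¬ r n₂ b) : e n₁ n₂ := by
  induction a using hwf.induction generalizing n₁ n₂ with
  | _ a ih =>
    rcases h₁.cases_head with rfl | ⟨b, hab, hbn₁⟩
    · rcases h₂.cases_head with rfl | ⟨c, hac, -⟩
      · exact he.refl _
      · exact absurd hac (hn₁ c)
    rcases h₂.cases_head with rfl | ⟨c, hac, hcn₂⟩
    · exact absurd hab (hn₂ b)
    -- join `b` and `c` up to `e`, then carry a normal form of `b'` over to one reachable from `c'`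
    obtain ⟨b', c', hbb', hcc', hbc'⟩ := hlc a b c hab hac
    obtain ⟨m, hb'm, hm⟩ := exists_reflTransGen_normal hwf b'
    obtain ⟨m', hc'm', hmm'⟩ := hb'm.exists_of_simulation hsim hbc'
    have hm' : ∀ d, ¬ r m' d := fun d hd => by
      obtain ⟨d', hmd', -⟩ := hsim _ _ _ (he.symm hmm') hd
      exact hm d' hmd'
    exact he.trans (he.trans (ih b hab hbn₁ hn₁ (hbb'.trans hb'm) hm) hmm')
      (ih c hac (hcc'.trans hc'm') hm' hcn₂ hn₂)

end Relation

section PendantP₂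

/-- The path `xy` is a pendant `P₂` of `G[s]`, attached to the rest of `G[s]` at `z`. -/
structure IsPendantP₂ (G : SimpleGraph V) (s : Finset V) (x y z : V) : Prop where
  mem_x : x ∈ s
  mem_y : y ∈ s
  mem_z : z ∈ s
  adj_xy : G.Adj x y
  adj_yz : G.Adj y z
  z_ne_x : z ≠ x
  eq_of_adj_x : ∀ w ∈ s, G.Adj x w → w = y
  eq_of_adj_y : ∀ w ∈ s, G.Adj y w → w = x ∨ w = z

/-- A permutation of all of `V` rather than an isomorphism `G[s] ≃g G[t]`, so that removal
steps can be transported as finsets. -/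
def IsInducedIso (G : SimpleGraph V) (σ : V ≃ V) (s t : Finset V) : Prop :=
  (∀ v, σ v ∈ t ↔ v ∈ s) ∧ ∀ u ∈ s, ∀ v ∈ s, (G.Adj (σ u) (σ v) ↔ G.Adj u v)

variable {G : SimpleGraph V} {s t : Finset V}

namespace IsInducedIso

variable {σ τ : V ≃ V} {u : Finset V}

lemma refl (s : Finset V) : IsInducedIso G (Equiv.refl V) s s :=
  ⟨fun _ => Iff.rfl, fun _ _ _ _ => Iff.rfl⟩

lemma symm (h : IsInducedIso G σ s t) : IsInducedIso G σ.symm t s := by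
  obtain ⟨hmem, hadj⟩ := h
  refine ⟨fun v => by rw [← hmem, σ.apply_symm_apply], fun u hu v hv => ?_⟩
  rw [← hadj _ ((hmem _).1 (by simpa using hu)) _ ((hmem _).1 (by simpa using hv))]
  simp

lemma trans (h : IsInducedIso G σ s t) (h' : IsInducedIso G τ t u) :
    IsInducedIso G (σ.trans τ) s u :=
  ⟨fun v => (h'.1 _).trans (h.1 v), fun v hv w hw =>
    (h'.2 _ ((h.1 v).2 hv) _ ((h.1 w).2 hw)).trans (h.2 v hv w hw)⟩

lemma equivalence : Equivalence (fun s t => ∃ σ, IsInducedIso G σ s t) :=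
  ⟨fun s => ⟨_, refl s⟩, fun ⟨_, h⟩ => ⟨_, h.symm⟩, fun ⟨_, h⟩ ⟨_, h'⟩ => ⟨_, h.trans h'⟩⟩

def iso (h : IsInducedIso G σ s t) : G.induce (↑s : Set V) ≃g G.induce (↑t : Set V) :=
  ⟨σ.subtypeEquiv fun v => (h.1 v).symm, fun {u v} => h.2 u u.2 v v.2⟩

lemma erase_erase [DecidableEq V] (h : IsInducedIso G σ s t) (x y : V) :
    IsInducedIso G σ ((s.erase x).erase y) ((t.erase (σ x)).erase (σ y)) :=
  ⟨fun v => by simp [h.1 v], fun u hu v hv =>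
    h.2 u (Finset.mem_of_mem_erase (Finset.mem_of_mem_erase hu)) v
      (Finset.mem_of_mem_erase (Finset.mem_of_mem_erase hv))⟩

end IsInducedIso

namespace IsPendantP₂

variable {x y z x₁ y₁ z₁ x₂ y₂ z₂ : V}

lemma mono (h : IsPendantP₂ G s x y z) (hts : t ⊆ s) (hx : x ∈ t) (hy : y ∈ t) (hz : z ∈ t) :
    IsPendantP₂ G t x y z :=
  ⟨hx, hy, hz, h.adj_xy, h.adj_yz, h.z_ne_x, fun w hw => h.eq_of_adj_x w (hts hw),
    fun w hw => h.eq_of_adj_y w (hts hw)⟩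

lemma map (h : IsPendantP₂ G s x y z) {σ : V ≃ V} (hσ : IsInducedIso G σ s t) :
    IsPendantP₂ G t (σ x) (σ y) (σ z) := by
  obtain ⟨hmem, hadj⟩ := hσ
  have hmem' : ∀ w ∈ t, ∃ v ∈ s, σ v = w := fun w hw =>
    ⟨σ.symm w, (hmem _).1 (by simpa using hw), σ.apply_symm_apply w⟩
  refine ⟨(hmem x).2 h.mem_x, (hmem y).2 h.mem_y, (hmem z).2 h.mem_z,
    (hadj _ h.mem_x _ h.mem_y).2 h.adj_xy, (hadj _ h.mem_y _ h.mem_z).2 h.adj_yz,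
    σ.injective.ne h.z_ne_x, fun w hw hxw => ?_, fun w hw hyw => ?_⟩
  · obtain ⟨v, hv, rfl⟩ := hmem' w hw
    rw [h.eq_of_adj_x v hv ((hadj _ h.mem_x _ hv).1 hxw)]
  · obtain ⟨v, hv, rfl⟩ := hmem' w hw
    rcases h.eq_of_adj_y v hv ((hadj _ h.mem_y _ hv).1 hyw) with rfl | rfl <;> simp

lemma leaf_ne (h₁ : IsPendantP₂ G s x₁ y₁ z₁) (h₂ : IsPendantP₂ G s x₂ y₂ z₂) : x₁ ≠ y₂ := by
  rintro rfl
  exact h₂.z_ne_x <| (h₁.eq_of_adj_x z₂ h₂.mem_z h₂.adj_yz).trans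
    (h₁.eq_of_adj_x x₂ h₂.mem_x h₂.adj_xy.symm).symm

lemma attach_ne_leaf (h₁ : IsPendantP₂ G s x₁ y₁ z₁) (h₂ : IsPendantP₂ G s x₂ y₂ z₂)
    (hy : y₁ ≠ y₂) : z₁ ≠ x₂ := by
  rintro rfl
  exact hy (h₂.eq_of_adj_x y₁ h₁.mem_y h₁.adj_yz.symm)

variable [DecidableEq V]

lemma ne_pair (h : IsPendantP₂ G s x y z) (a b : V) : s ≠ {a, b} := by
  intro hs
  have hsub : ({x, y, z} : Finset V) ⊆ {a, b} := by
    simp [Finset.insert_subset_iff, ← hs, h.mem_x, h.mem_y, h.mem_z]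
  have := Finset.card_le_card hsub
  rw [Finset.card_insert_of_notMem (by simp [h.adj_xy.ne, h.z_ne_x.symm]),
    Finset.card_pair h.adj_yz.ne] at this
  exact absurd ((Finset.card_insert_le _ _).trans_lt' this) (by simp)

lemma isInducedIso_swap (h₁ : IsPendantP₂ G s x₁ y z₁) (h₂ : IsPendantP₂ G s x₂ y z₂) :
    IsInducedIso G (Equiv.swap x₁ x₂) s s := by
  obtain ⟨hx₁, -, -, hxy₁, -, -, hl₁, -⟩ := h₁
  obtain ⟨hx₂, -, -, hxy₂, -, -, hl₂, -⟩ := h₂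
  constructor
  · intro v; grind
  · intro u hu v hv; grind [SimpleGraph.adj_comm, SimpleGraph.irrefl]

/-- Here `x₁ y₁ y₂ x₂` is a component of `G[s]`, and `σ` reverses it. -/
lemma isInducedIso_swap_mul_swap (h₁ : IsPendantP₂ G s x₁ y₁ y₂)
    (h₂ : IsPendantP₂ G s x₂ y₂ y₁) :
    IsInducedIso G (Equiv.swap x₁ x₂ * Equiv.swap y₁ y₂) s s := by
  obtain ⟨hx₁, hy₁, -, hxy₁, hyy, -, hl₁, hd₁⟩ := h₁
  obtain ⟨hx₂, hy₂, -, hxy₂, -, -, hl₂, hd₂⟩ := h₂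
  constructor
  · intro v; grind [Equiv.Perm.mul_apply]
  · intro u hu v hv
    grind (splits := 30) [Equiv.Perm.mul_apply, SimpleGraph.adj_comm, SimpleGraph.irrefl]

end IsPendantP₂

variable [DecidableEq V]

lemma pendantStep_iff :
    PendantStep G s t ↔ (∃ x y z, IsPendantP₂ G s x y z ∧ t = (s.erase x).erase y) ∨
      (∃ x y, G.Adj x y ∧ s = {x, y} ∧ t = ∅) := by
  constructor
  · rintro (⟨x, hx, y, hy, hxy, hx', ⟨z, hz, hzx, hyz, hy'⟩, rfl⟩ | ⟨x, -, y, -, hxy, rfl, rfl⟩)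
    · exact .inl ⟨x, y, z, ⟨hx, hy, hz, hxy, hyz, hzx, hx', hy'⟩, rfl⟩
    · exact .inr ⟨x, y, hxy, rfl, rfl⟩
  · rintro (⟨x, y, z, h, rfl⟩ | ⟨x, y, hxy, rfl, rfl⟩)
    · exact .inl ⟨x, h.mem_x, y, h.mem_y, h.adj_xy, h.eq_of_adj_x,
        ⟨z, h.mem_z, h.z_ne_x, h.adj_yz, h.eq_of_adj_y⟩, rfl⟩
    · exact .inr ⟨x, by simp, y, by simp, hxy, rfl, rfl⟩

lemma PendantStep.ssubset (h : PendantStep G s t) : t ⊂ s := by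
  rcases pendantStep_iff.1 h with ⟨x, y, z, hp, rfl⟩ | ⟨x, y, -, rfl, rfl⟩
  · exact Finset.ssubset_of_subset_of_ssubset (Finset.erase_subset _ _)
      (Finset.erase_ssubset hp.mem_x)
  · exact Finset.empty_ssubset.2 ⟨x, by simp⟩

lemma wellFounded_flip_pendantStep : WellFounded (flip (PendantStep G)) :=
  Finset.isWellFounded_ssubset.wf.mono fun _ _ h => PendantStep.ssubset h

lemma IsInducedIso.pendantStep {σ : V ≃ V} (h : IsInducedIso G σ s t) {s' : Finset V}
    (hs : PendantStep G s s') : ∃ t', PendantStep G t t' ∧ IsInducedIso G σ s' t' := by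
  rcases pendantStep_iff.1 hs with ⟨x, y, z, hp, rfl⟩ | ⟨x, y, hxy, rfl, rfl⟩
  · exact ⟨_, pendantStep_iff.2 (.inl ⟨_, _, _, hp.map h, rfl⟩), h.erase_erase x y⟩
  · have ht : t = {σ x, σ y} := by
      ext v
      rw [← σ.apply_symm_apply v, h.1]
      simp [Equiv.symm_apply_eq]
    exact ⟨∅, pendantStep_iff.2 (.inr ⟨_, _, (h.2 _ (by simp) _ (by simp)).2 hxy, ht, rfl⟩),
      by simp [IsInducedIso]⟩

lemma IsPendantP₂.locallyConfluent {x₁ y₁ z₁ x₂ y₂ z₂ : V} (h₁ : IsPendantP₂ G s x₁ y₁ z₁)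
    (h₂ : IsPendantP₂ G s x₂ y₂ z₂) :
    (∃ σ, IsInducedIso G σ ((s.erase x₁).erase y₁) ((s.erase x₂).erase y₂)) ∨
      ∃ u, PendantStep G ((s.erase x₁).erase y₁) u ∧ PendantStep G ((s.erase x₂).erase y₂) u := by
  have hxy₁ : x₁ ≠ y₂ := h₁.leaf_ne h₂
  have hxy₂ : x₂ ≠ y₁ := h₂.leaf_ne h₁
  by_cases hx : x₁ = x₂
  · subst hx
    obtain rfl := h₁.eq_of_adj_x y₂ h₂.mem_y h₂.adj_xy
    exact .inl ⟨_, .refl _⟩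
  by_cases hy : y₁ = y₂
  · subst hy
    have := (h₁.isInducedIso_swap h₂).erase_erase x₁ y₁
    rw [Equiv.swap_apply_left, Equiv.swap_apply_of_ne_of_ne hxy₁.symm hxy₂.symm] at this
    exact .inl ⟨_, this⟩
  by_cases hz : z₁ = y₂
  · subst z₁
    have hz₂ : y₁ = z₂ := (h₂.eq_of_adj_y y₁ h₁.mem_y h₁.adj_yz.symm).resolve_left hxy₂.symm
    subst z₂
    have := (h₁.isInducedIso_swap_mul_swap h₂).erase_erase x₁ y₁
    simp only [Equiv.Perm.mul_apply, Equiv.swap_apply_left, Equiv.swap_apply_of_ne_of_ne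
      h₁.adj_xy.ne hxy₁, Equiv.swap_apply_of_ne_of_ne hxy₁.symm h₂.adj_xy.ne.symm] at this
    exact .inl ⟨_, this⟩
  have hz₂ : z₂ ≠ y₁ := by
    rintro rfl
    rcases h₁.eq_of_adj_y y₂ h₂.mem_y h₂.adj_yz.symm with h | h
    exacts [hxy₁ h.symm, hz h.symm]
  have h₁' : IsPendantP₂ G ((s.erase x₂).erase y₂) x₁ y₁ z₁ :=
    h₁.mono ((Finset.erase_subset _ _).trans (Finset.erase_subset _ _))
      (by simp [hxy₁, hx, h₁.mem_x]) (by simp [hy, hxy₂.symm, h₁.mem_y])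
      (by simp [hz, h₁.attach_ne_leaf h₂ hy, h₁.mem_z])
  have h₂' : IsPendantP₂ G ((s.erase x₁).erase y₁) x₂ y₂ z₂ :=
    h₂.mono ((Finset.erase_subset _ _).trans (Finset.erase_subset _ _))
      (by simp [hxy₂, Ne.symm hx, h₂.mem_x]) (by simp [Ne.symm hy, hxy₁.symm, h₂.mem_y])
      (by simp [hz₂, h₂.attach_ne_leaf h₁ (Ne.symm hy), h₂.mem_z])
  refine .inr ⟨_, pendantStep_iff.2 (.inl ⟨_, _, _, h₂', rfl⟩),
    pendantStep_iff.2 (.inl ⟨_, _, _, h₁', ?_⟩)⟩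
  ext v
  simp only [Finset.mem_erase]
  tauto

lemma pendantStep_locallyConfluent {t₁ t₂ : Finset V} (h₁ : PendantStep G s t₁)
    (h₂ : PendantStep G s t₂) :
    ∃ t₁' t₂', Relation.ReflTransGen (PendantStep G) t₁ t₁' ∧
      Relation.ReflTransGen (PendantStep G) t₂ t₂' ∧ ∃ σ, IsInducedIso G σ t₁' t₂' := by
  rcases pendantStep_iff.1 h₁ with ⟨x₁, y₁, z₁, hp₁, rfl⟩ | ⟨x₁, y₁, -, hs₁, rfl⟩ <;>
    rcases pendantStep_iff.1 h₂ with ⟨x₂, y₂, z₂, hp₂, rfl⟩ | ⟨x₂, y₂, -, hs₂, rfl⟩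
  · rcases hp₁.locallyConfluent hp₂ with hσ | ⟨u, hu₁, hu₂⟩
    exacts [⟨_, _, .refl, .refl, hσ⟩, ⟨u, u, .single hu₁, .single hu₂, _, .refl u⟩]
  · exact absurd hs₂ (hp₁.ne_pair _ _)
  · exact absurd hs₁ (hp₂.ne_pair _ _)
  · exact ⟨∅, ∅, .refl, .refl, _, .refl ∅⟩

end PendantP₂

/-- For every finite simple graph `G`, the residual graph `R(G)` is unique up to
isomorphism: any two graphs obtained from `G` by iteratively removing pendant `P₂`'s
until none remains are isomorphic. -/
theorem residual_unique [Fintype V] [DecidableEq V] (G : SimpleGraph V)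
    (s₁ s₂ : Finset V) (h₁ : IsResidualSet G s₁) (h₂ : IsResidualSet G s₂) :
    Nonempty ((G.induce (↑s₁ : Set V)) ≃g (G.induce (↑s₂ : Set V))) := by
  have hsim : ∀ s t s', (∃ σ, IsInducedIso G σ s t) → PendantStep G s s' →
      ∃ t', PendantStep G t t' ∧ ∃ σ, IsInducedIso G σ s' t' := fun _ _ _ ⟨σ, hσ⟩ hs =>
    (hσ.pendantStep hs).imp fun _ ⟨ht, hσ'⟩ => ⟨ht, σ, hσ'⟩
  obtain ⟨σ, hσ⟩ := Relation.equiv_of_normal_of_locallyConfluent_modulo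
    wellFounded_flip_pendantStep IsInducedIso.equivalence hsim
    (fun _ _ _ => pendantStep_locallyConfluent) h₁.1 h₁.2 h₂.1 h₂.2
  exact ⟨hσ.iso⟩
end

section
/- Let G be a finite simple graph and R(G) a residual graph of G. Then the graph G − V(R(G)) (the subgraph of G induced on the vertices removed in passing from G to R(G)) is a forest that has a unique perfect matching. -/
variable {V : Type*}

/-!
If `T` is obtained from `D` by removing a pendant `P₂` `xy`, no cycle of `G` inside `D` passes
through the leaf `x`, and hence none passes through `y`, whose only other neighbour is `z`; so
`G[D]` is acyclic when `G[T]` is. Every matching covering `D` must match `x` with its only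
neighbour `y`, so the matchings covering `D` are exactly those covering `T` plus the edge `xy`.
Induction along the removal sequence, starting from the empty set, gives the theorem.
-/

namespace SimpleGraph

variable {W : Type*} {G : SimpleGraph V}

lemma Walk.IsCycle.notMem_support_of_forall_adj_eq {u v z : V} {c : G.Walk u u}
    (hc : c.IsCycle) (h : ∀ w ∈ c.support, G.Adj v w → w = z) : v ∉ c.support := by
  intro hv
  obtain ⟨w₁, w₂, hne, hnbrs⟩ := Set.ncard_eq_two.mp (hc.ncard_neighborSet_toSubgraph_eq_two hv)
  have h₁ : c.toSubgraph.Adj v w₁ := by simp [← Subgraph.mem_neighborSet, hnbrs]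
  have h₂ : c.toSubgraph.Adj v w₂ := by simp [← Subgraph.mem_neighborSet, hnbrs]
  refine hne ((h w₁ ?_ h₁.adj_sub).trans (h w₂ ?_ h₂.adj_sub).symm)
  · exact c.mem_verts_toSubgraph.mp h₁.snd_mem
  · exact c.mem_verts_toSubgraph.mp h₂.snd_mem

lemma Subgraph.map_injective {G' : SimpleGraph W} {f : G →g G'} (hf : Function.Injective f) :
    Function.Injective (Subgraph.map f) := by
  intro H₁ H₂ h
  ext u v
  · simpa [hf.eq_iff] using congrArg (f u ∈ ·.verts) h
  · simpa [Relation.map_apply_apply hf hf] using congrArg (·.Adj (f u) (f v)) h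

namespace Subgraph

variable {M : G.Subgraph} {x y : V}

lemma IsMatching.deleteVerts_pair (hM : M.IsMatching) (hxy : M.Adj x y) :
    (M.deleteVerts {x, y}).IsMatching := by
  rintro v ⟨hv, hvxy⟩
  obtain ⟨w, hvw, hw⟩ := hM hv
  have hwxy : w ∉ ({x, y} : Set V) := by
    rintro (rfl | rfl)
    · exact hvxy (.inr (hM.eq_of_adj_left hvw.symm hxy))
    · exact hvxy (.inl (hM.eq_of_adj_right hvw hxy))
  exact ⟨w, deleteVerts_adj.mpr ⟨hv, hvxy, hvw.snd_mem, hwxy, hvw⟩,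
    fun u hu => hw u (deleteVerts_adj.mp hu).2.2.2.2⟩

lemma IsMatching.eq_deleteVerts_sup_subgraphOfAdj (hM : M.IsMatching) (hxy : M.Adj x y) :
    M = M.deleteVerts {x, y} ⊔ G.subgraphOfAdj (M.adj_sub hxy) := by
  ext u v
  · simp only [verts_sup, deleteVerts_verts, subgraphOfAdj_verts, Set.sdiff_union_self]
    grind [hxy.fst_mem, hxy.snd_mem]
  · simp only [sup_adj, deleteVerts_adj, subgraphOfAdj_adj, Sym2.eq, Sym2.rel_iff',
      Set.mem_insert_iff, Set.mem_singleton_iff, Prod.mk.injEq, Prod.swap_prod_mk]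
    grind [hM.eq_of_adj_left, hM.eq_of_adj_right, Adj.fst_mem, Adj.snd_mem, Adj.symm]

end Subgraph

variable {T : Set V} {x y z : V}

lemma isAcyclic_induce_insert_pendant (hT : (G.induce T).IsAcyclic)
    (hx : ∀ w ∈ insert x (insert y T), G.Adj x w → w = y)
    (hy : ∀ w ∈ insert x (insert y T), G.Adj y w → w = x ∨ w = z) :
    (G.induce (insert x (insert y T))).IsAcyclic := by
  intro u c hc
  set c' := c.map (Embedding.induce (insert x (insert y T))).toHom
  have hc' : c'.IsCycle := (Walk.isCycle_map_iff_of_injective Subtype.val_injective).mpr hc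
  have hD : ∀ v ∈ c'.support, v ∈ insert x (insert y T) := by
    intro v hv
    obtain ⟨w, -, rfl⟩ := List.mem_map.mp (Walk.support_map _ c ▸ hv)
    exact w.2
  have hx' : x ∉ c'.support :=
    hc'.notMem_support_of_forall_adj_eq fun w hw => hx w (hD w hw)
  have hy' : y ∉ c'.support := hc'.notMem_support_of_forall_adj_eq fun w hw hyw =>
    (hy w (hD w hw) hyw).resolve_left (by rintro rfl; exact hx' hw)
  have hT' : ∀ v ∈ c'.support, v ∈ T := fun v hv => by
    rcases hD v hv with rfl | rfl | h
    · exact absurd hv hx'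
    · exact absurd hv hy'
    · exact h
  have hcycle : (c'.induce T hT').IsCycle := by
    rwa [← Walk.isCycle_map_iff_of_injective (f := (Embedding.induce T).toHom)
      Subtype.val_injective, Walk.map_induce]
  exact hT _ hcycle

lemma existsUnique_isMatching_insert_pendant (hxy : G.Adj x y) (hxT : x ∉ T) (hyT : y ∉ T)
    (hx : ∀ w ∈ insert x (insert y T), G.Adj x w → w = y)
    (hT : ∃! M : G.Subgraph, M.verts = T ∧ M.IsMatching) :
    ∃! M : G.Subgraph, M.verts = insert x (insert y T) ∧ M.IsMatching := by
  obtain ⟨MT, ⟨hMTv, hMT⟩, hMT_unique⟩ := hT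
  refine ⟨MT ⊔ G.subgraphOfAdj hxy, ⟨?_, hMT.sup (.subgraphOfAdj hxy) ?_⟩, ?_⟩
  · ext; simp [hMTv]
  · rw [hMT.support_eq_verts, (Subgraph.IsMatching.subgraphOfAdj hxy).support_eq_verts, hMTv,
      subgraphOfAdj_verts]
    simp [hxT, hyT]
  rintro M ⟨hMv, hM⟩
  have hMxy : M.Adj x y := by
    obtain ⟨w, hxw, -⟩ := hM (hMv ▸ Set.mem_insert x _)
    rwa [hx w (hMv ▸ hxw.snd_mem) hxw.adj_sub] at hxw
  have hMT' : M.deleteVerts {x, y} = MT := by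
    refine hMT_unique _ ⟨?_, hM.deleteVerts_pair hMxy⟩
    rw [Subgraph.deleteVerts_verts, hMv]
    grind
  rw [hM.eq_deleteVerts_sup_subgraphOfAdj hMxy, hMT']

lemma existsUnique_isPerfectMatching_induce {D : Set V}
    (h : ∃! M : G.Subgraph, M.verts = D ∧ M.IsMatching) :
    ∃! M : (G.induce D).Subgraph, M.IsPerfectMatching := by
  obtain ⟨M₀, ⟨hM₀v, hM₀⟩, hM₀_unique⟩ := h
  set f := (Embedding.induce D).toHom
  have hmap : ∀ M : (G.induce D).Subgraph, M.IsPerfectMatching → M.map f = M₀ := by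
    refine fun M hM => hM₀_unique _ ⟨?_, hM.1.map f Subtype.val_injective⟩
    rw [Subgraph.map_verts, hM.2.verts_eq_univ, Set.image_univ]
    exact Subtype.range_coe
  have hcomap : (M₀.comap f).IsPerfectMatching := by
    refine Subgraph.isPerfectMatching_iff.mpr fun v => ?_
    obtain ⟨w, hvw, hw⟩ := hM₀ (hM₀v.symm ▸ v.2 : (v : V) ∈ M₀.verts)
    refine ⟨⟨w, hM₀v ▸ hvw.snd_mem⟩, ⟨hvw.adj_sub, hvw⟩, fun u hu => Subtype.ext (hw u hu.2)⟩
  exact ⟨_, hcomap, fun M hM =>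
    Subgraph.map_injective Subtype.val_injective ((hmap M hM).trans (hmap _ hcomap).symm)⟩

end SimpleGraph

section PendantStep

open SimpleGraph

variable [DecidableEq V] {G : SimpleGraph V} {a s t : Finset V}

lemma PendantStep.exists_pendant (h : PendantStep G a t) :
    ∃ x y z, G.Adj x y ∧ x ∉ t ∧ y ∉ t ∧ a = insert x (insert y t) ∧
      (∀ w ∈ a, G.Adj x w → w = y) ∧ ∀ w ∈ a, G.Adj y w → w = x ∨ w = z := by
  rcases h with ⟨x, hx, y, hy, hxy, hxleaf, ⟨z, -, -, -, hydeg⟩, rfl⟩ |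
    ⟨x, -, y, -, hxy, rfl, rfl⟩
  · refine ⟨x, y, z, hxy, by simp, by simp, ?_, hxleaf, hydeg⟩
    rw [Finset.insert_erase (Finset.mem_erase.mpr ⟨hxy.ne', hy⟩), Finset.insert_erase hx]
  · refine ⟨x, y, x, hxy, by simp, by simp, rfl, ?_, ?_⟩ <;> simp [hxy.ne]

lemma PendantStep.reflTransGen_subset (h : Relation.ReflTransGen (PendantStep G) a s) : s ⊆ a := by
  refine Relation.reflTransGen_le_of_le (r := (· ⊇ ·)) (fun b c hbc => ?_) a s h
  obtain ⟨x, y, -, -, -, -, rfl, -⟩ := hbc.exists_pendant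
  exact (Finset.subset_insert _ _).trans (Finset.subset_insert _ _)

lemma PendantStep.reflTransGen_isAcyclic_and_existsUnique_isMatching
    (h : Relation.ReflTransGen (PendantStep G) a s) :
    (G.induce ↑(a \ s)).IsAcyclic ∧ ∃! M : G.Subgraph, M.verts = ↑(a \ s) ∧ M.IsMatching := by
  induction h using Relation.ReflTransGen.head_induction_on with
  | refl =>
    rw [Finset.sdiff_self, Finset.coe_empty]
    refine ⟨.of_subsingleton, ⊥, ⟨rfl, fun v hv => hv.elim⟩, fun M hM => ?_⟩
    exact M.eq_bot_iff_verts_eq_empty.mpr hM.1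
  | @head b t hstep hchain ih =>
    obtain ⟨x, y, z, hxy, hxt, hyt, rfl, hx, hy⟩ := hstep.exists_pendant
    have hs := PendantStep.reflTransGen_subset hchain
    have hremoved : insert x (insert y t) \ s = insert x (insert y (t \ s)) := by
      rw [Finset.insert_sdiff_of_notMem _ fun h => hxt (hs h),
        Finset.insert_sdiff_of_notMem _ fun h => hyt (hs h)]
    have hsub : (insert x (insert y ↑(t \ s)) : Set V) ⊆ ↑(insert x (insert y t) : Finset V) := by
      push_cast
      gcongr
      exact sdiff_le
    rw [hremoved, Finset.coe_insert, Finset.coe_insert]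
    exact ⟨isAcyclic_induce_insert_pendant ih.1 (fun w hw => hx w (hsub hw))
        (fun w hw => hy w (hsub hw)),
      existsUnique_isMatching_insert_pendant hxy (by simp [hxt]) (by simp [hyt])
        (fun w hw => hx w (hsub hw)) ih.2⟩

end PendantStep

/-- Let `G` be a finite simple graph and `R(G)` a residual graph of `G`.  Then
`G - V(R(G))`, the subgraph of `G` induced on the vertices removed in passing from `G` to
`R(G)`, is a forest that has a unique perfect matching. -/
theorem removed_part_is_forest_with_unique_perfect_matching [Fintype V] [DecidableEq V]
    (G : SimpleGraph V) (s : Finset V) (hs : IsResidualSet G s) :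
    (G.induce ((↑s : Set V)ᶜ)).IsAcyclic ∧
    ∃! M : (G.induce ((↑s : Set V)ᶜ)).Subgraph, M.IsPerfectMatching := by
  have hremoved : ((Finset.univ \ s : Finset V) : Set V) = (↑s)ᶜ := by
    rw [Finset.coe_sdiff, Finset.coe_univ, Set.compl_eq_univ_sdiff]
  obtain ⟨hacyclic, hmatching⟩ :=
    PendantStep.reflTransGen_isAcyclic_and_existsUnique_isMatching hs.1
  rw [hremoved] at hacyclic hmatching
  exact ⟨hacyclic, SimpleGraph.existsUnique_isPerfectMatching_induce hmatching⟩
end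

section
/- If T is a finite tree that admits a perfect matching and v ∈ V(T), then Staller has a strategy for the S-game of the Maker-Breaker domination game on T such that Dominator must select at least n(T)/2 vertices before his selected vertices form a dominating set of T, and such that v is the vertex Staller selects in her last move. -/
/-!
Root `T` at `v`. Every edge of the perfect matching joins a vertex to its parent; call the
parent the support and the child the leaf of the pair. Listing the supports by non-increasing
depth as `w₀, …, w_{m-1} = v`, with matched leaves `u₀, …, u_{m-1}`, every neighbour of `uᵢ`
other than `wᵢ` is a child of `uᵢ`, hence a deeper support: it is some `wⱼ` with `j < i`.

Staller claims `w₀, w₁, …` in turn. While she can do so, `uᵢ` can only be dominated by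
claiming `uᵢ` itself, so Dominator needs all `m = n/2` leaves and Staller's last move is
`w_{m-1} = v`. If instead Dominator has taken `w_t` before Staller's move in round `t`, then
among his `t` moves some `uᵢ` with `i < t` is missing; Staller claims it, and it can never be
dominated.
-/

variable {V : Type*}

open SimpleGraph Finset

theorem Dominates.mem_of_forall_adj_notMem {G : SimpleGraph V} {D : Finset V}
    (hD : Dominates G ∅ D) {x : V} (hx : ∀ y, G.Adj y x → y ∉ D) : x ∈ D := by
  obtain ⟨y, hy, rfl | hadj⟩ := hD x (Set.notMem_empty x)
  · exact hy
  · exact absurd hy (hx y hadj)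

section Play

variable [DecidableEq V] (p : ℕ → V)

def dominatorMoves (k : ℕ) : Finset V :=
  (range k).image fun i => p (2 * i + 1)

theorem card_dominatorMoves_le (k : ℕ) : #(dominatorMoves p k) ≤ k :=
  card_image_le.trans (card_range k).le

variable {p}

theorem stallerMove_notMem_dominatorMoves {n s k : ℕ} (hp : Set.InjOn p (Set.Iio n))
    (hs : 2 * s < n) (hk : 2 * k ≤ n) : p (2 * s) ∉ dominatorMoves p k := by
  simp only [dominatorMoves, mem_image, mem_range, not_exists, not_and]
  intro i hi heq
  have := hp (show 2 * i + 1 < n by omega) hs heq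
  omega

theorem mem_history {t : ℕ} {x : V} (hx : x ∈ (List.range (2 * t)).map p) :
    (∃ s < t, p (2 * s) = x) ∨ x ∈ dominatorMoves p t := by
  obtain ⟨r, hr, rfl⟩ := List.mem_map.mp hx
  rw [List.mem_range] at hr
  obtain ⟨s, rfl | rfl⟩ := Nat.even_or_odd' r
  · exact Or.inl ⟨s, by omega, rfl⟩
  · exact Or.inr (mem_image.mpr ⟨s, mem_range.mpr (by omega), rfl⟩)

end Play

/-- Staller intends to claim `support 0, support 1, …` in turn; once she has claimed
`support 0, …, support i`, the vertex `leaf i` can only be dominated by claiming it. -/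
structure LeafSchedule (G : SimpleGraph V) (m : ℕ) where
  leaf : ℕ → V
  support : ℕ → V
  injOn_leaf : Set.InjOn leaf (Set.Iio m)
  injOn_support : Set.InjOn support (Set.Iio m)
  leaf_ne_support : ∀ i < m, ∀ j < m, leaf i ≠ support j
  exists_le_support_eq_of_adj : ∀ i < m, ∀ x, G.Adj x (leaf i) → ∃ j ≤ i, support j = x

namespace LeafSchedule

variable {G : SimpleGraph V} {m : ℕ}

theorem exists_of_list {f : V → V} (hf : Function.Injective f) {l : List V} (d : V)
    (hnodup : l.Nodup) (hleaf : ∀ x ∈ l, f x ∉ l)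
    (hadj : ∀ i (hi : i < l.length), ∀ x, G.Adj x (f l[i]) →
      ∃ j ≤ i, ∃ hj : j < l.length, l[j] = x) :
    ∃ S : LeafSchedule G l.length, ∀ i (hi : i < l.length), S.support i = l[i] := by
  have hget : ∀ i (hi : i < l.length), l.getD i d = l[i] := fun i hi =>
    List.getD_eq_getElem _ _ hi
  refine ⟨⟨fun i => f (l.getD i d), fun i => l.getD i d, ?_, ?_, ?_, ?_⟩, hget⟩
  · intro i hi j hj heq
    simp only [hget i hi, hget j hj] at heq
    exact hnodup.getElem_inj_iff.mp (hf heq)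
  · intro i hi j hj heq
    simp only [hget i hi, hget j hj] at heq
    exact hnodup.getElem_inj_iff.mp heq
  · intro i hi j hj heq
    simp only [hget i hi, hget j hj] at heq
    exact hleaf _ (l.getElem_mem hi) (heq ▸ l.getElem_mem hj)
  · intro i hi x hx
    simp only [hget i hi] at hx
    obtain ⟨j, hji, hj, rfl⟩ := hadj i hi x hx
    exact ⟨j, hji, hget j hj⟩

variable [DecidableEq V] (S : LeafSchedule G m)

theorem exists_leaf_notMem_of_support_mem {D : Finset V} {t : ℕ} (hD : #D ≤ t) (ht : t < m)
    (hw : S.support t ∈ D) : ∃ i < t, S.leaf i ∉ D := by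
  by_contra! hleaves
  have hsub : insert (S.support t) ((range t).image S.leaf) ⊆ D :=
    insert_subset hw fun x hx => by
      obtain ⟨i, hi, rfl⟩ := mem_image.mp hx
      exact hleaves i (mem_range.mp hi)
  have hnotMem : S.support t ∉ (range t).image S.leaf := fun hx => by
    obtain ⟨i, hi, heq⟩ := mem_image.mp hx
    exact S.leaf_ne_support i ((mem_range.mp hi).trans ht) t ht heq
  have hinj : Set.InjOn S.leaf (range t) :=
    S.injOn_leaf.mono fun i hi => (mem_range.mp hi).trans ht
  have := card_le_card hsub
  rw [card_insert_of_notMem hnotMem, card_image_of_injOn hinj, card_range] at this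
  omega

variable {p : ℕ → V} {n k : ℕ}

theorem leaf_mem_dominatorMoves (hp : Set.InjOn p (Set.Iio n)) (hk : 2 * k ≤ n)
    (hdom : Dominates G ∅ (dominatorMoves p k)) {i : ℕ} (hi : 2 * i < n) (him : i < m)
    (hfollow : ∀ j ≤ i, p (2 * j) = S.support j) : S.leaf i ∈ dominatorMoves p k :=
  hdom.mem_of_forall_adj_notMem fun y hy => by
    obtain ⟨j, hji, rfl⟩ := S.exists_le_support_eq_of_adj i him y hy
    rw [← hfollow j hji]
    exact stallerMove_notMem_dominatorMoves hp (by omega) hk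

theorem eq_of_dominates (hp : Set.InjOn p (Set.Iio n)) (hk : 2 * k ≤ n) (hkm : k ≤ m)
    (hdom : Dominates G ∅ (dominatorMoves p k)) (hfollow : ∀ t < k, p (2 * t) = S.support t) :
    k = m := by
  refine hkm.antisymm (not_lt.mp fun hk_lt => ?_)
  set L := (range k).image S.leaf
  have hsub : L ⊆ dominatorMoves p k := fun x hx => by
    obtain ⟨i, hi, rfl⟩ := mem_image.mp hx
    rw [mem_range] at hi
    exact S.leaf_mem_dominatorMoves hp hk hdom (by omega) (by omega)
      fun j hj => hfollow j (by omega)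
  have hcard : #L = k := by
    rw [card_image_of_injOn (S.injOn_leaf.mono fun i hi => by simp at hi ⊢; omega), card_range]
  have hL : L = dominatorMoves p k :=
    eq_of_subset_of_card_le hsub (hcard ▸ card_dominatorMoves_le p k)
  -- Dominator holds exactly the leaves before `leaf k`, which none of them dominates.
  have hmem : S.leaf k ∈ L := (hL ▸ hdom).mem_of_forall_adj_notMem fun y hy hyL => by
    obtain ⟨j, hjk, rfl⟩ := S.exists_le_support_eq_of_adj k hk_lt y hy
    obtain ⟨i, hi, heq⟩ := mem_image.mp hyL
    exact S.leaf_ne_support i (by simp at hi; omega) j (by omega) heq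
  obtain ⟨i, hi, heq⟩ := mem_image.mp hmem
  rw [mem_range] at hi
  have := S.injOn_leaf (show i < m by omega) hk_lt heq
  omega

variable [Fintype V]

noncomputable def strategy (h : List V) : V :=
  if h.length / 2 < m ∧ S.support (h.length / 2) ∉ h then S.support (h.length / 2)
  else if h₂ : ∃ i, i < m ∧ S.leaf i ∉ h then S.leaf (Nat.find h₂)
  else if h₃ : ∃ x, x ∉ h then h₃.choose
  else S.support 0

theorem strategy_notMem {h : List V} (hh : h.toFinset ≠ univ) : S.strategy h ∉ h := by
  unfold strategy
  split_ifs with h₁ h₂ h₃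
  · exact h₁.2
  · exact (Nat.find_spec h₂).2
  · exact h₃.choose_spec
  · push Not at h₃
    exact absurd (eq_univ_of_forall fun x => List.mem_toFinset.mpr (h₃ x)) hh

theorem strategy_eq_support {h : List V} {t : ℕ} (hlen : h.length = 2 * t) (ht : t < m)
    (hw : S.support t ∉ h) : S.strategy h = S.support t := by
  have ht' : h.length / 2 = t := by omega
  rw [strategy, ht', if_pos ⟨ht, hw⟩]

theorem exists_le_strategy_eq_leaf {h : List V} {t i : ℕ} (hlen : h.length = 2 * t)
    (hw : S.support t ∈ h) (hi : i < m) (hl : S.leaf i ∉ h) :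
    ∃ i' ≤ i, S.strategy h = S.leaf i' := by
  have ht : h.length / 2 = t := by omega
  have h₂ : ∃ i, i < m ∧ S.leaf i ∉ h := ⟨i, hi, hl⟩
  rw [strategy, ht, if_neg fun h₁ => h₁.2 hw, dif_pos h₂]
  exact ⟨_, Nat.find_min' h₂ ⟨hi, hl⟩, rfl⟩

theorem stallerMove_eq_support_of_dominates (hp : Set.InjOn p (Set.Iio n))
    (hσ : ∀ i, 2 * i < n → p (2 * i) = S.strategy ((List.range (2 * i)).map p))
    (hk : 2 * k ≤ n) (hkm : k ≤ m) (hdom : Dominates G ∅ (dominatorMoves p k)) :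
    ∀ t < k, p (2 * t) = S.support t := by
  intro t
  induction t using Nat.strong_induction_on with
  | _ t ih =>
  intro htk
  have hprev : ∀ s < t, p (2 * s) = S.support s := fun s hs => ih s hs (hs.trans htk)
  by_contra hne
  set h := (List.range (2 * t)).map p
  have hlen : h.length = 2 * t := by simp [h]
  have htm : t < m := by omega
  have hσt := hσ t (by omega)
  have hwh : S.support t ∈ h := by
    by_contra hw
    exact hne (hσt.trans (S.strategy_eq_support hlen htm hw))
  have hwD : S.support t ∈ dominatorMoves p t := by
    refine (mem_history hwh).resolve_left fun ⟨s, hs, heq⟩ => ?_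
    have := S.injOn_support (show s < m by omega) htm ((hprev s hs).symm.trans heq)
    omega
  obtain ⟨i, hit, hiD⟩ :=
    S.exists_leaf_notMem_of_support_mem (card_dominatorMoves_le p t) htm hwD
  have hih : S.leaf i ∉ h := fun hi => (mem_history hi).elim
    (fun ⟨s, hs, heq⟩ =>
      S.leaf_ne_support i (by omega) s (by omega) ((hprev s hs).symm.trans heq).symm)
    hiD
  obtain ⟨i', hi'i, hσi'⟩ := S.exists_le_strategy_eq_leaf hlen hwh (hit.trans htm) hih
  have hmem := S.leaf_mem_dominatorMoves hp hk hdom (i := i') (by omega) (by omega)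
    fun j hj => hprev j (by omega)
  rw [← hσi', ← hσt] at hmem
  exact stallerMove_notMem_dominatorMoves hp (by omega) hk hmem

end LeafSchedule

theorem Finset.exists_nodup_pairwise_ge (s : Finset V) (κ : V → ℕ) :
    ∃ l : List V, l.Nodup ∧ (∀ x, x ∈ l ↔ x ∈ s) ∧ l.length = #s ∧
      l.Pairwise fun a b => κ b ≤ κ a := by
  refine ⟨s.toList.mergeSort fun a b => κ b ≤ κ a,
    (List.mergeSort_perm _ _).nodup_iff.mpr s.nodup_toList, by simp, by simp, ?_⟩
  simpa using List.pairwise_mergeSort (le := fun a b => decide (κ b ≤ κ a))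
    (by simp only [decide_eq_true_eq]; omega)
    (by simp only [Bool.or_eq_true, decide_eq_true_eq]; omega) s.toList

theorem Fintype.card_eq_two_mul_card_filter_lt [Fintype V] {f : V → V}
    (hf : Function.Involutive f) {κ : V → ℕ} (hκ : ∀ x, κ x ≠ κ (f x)) :
    Fintype.card V = 2 * #(univ.filter fun x => κ x < κ (f x)) := by
  classical
  have hswap : ∀ x, ¬κ x < κ (f x) ↔ κ (f x) < κ (f (f x)) := fun x => by
    have := hκ x
    rw [hf x]
    omega
  have hcompl : #(univ.filter fun x => ¬κ x < κ (f x)) = #(univ.filter fun x => κ x < κ (f x)) :=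
    card_nbij' f f (fun x hx => by simpa [hswap] using hx)
      (fun x hx => by simpa [hswap, hf x] using hx) (fun x _ => hf x) (fun x _ => hf x)
  rw [← card_univ, ← card_filter_add_card_filter_not (fun x => κ x < κ (f x)), hcompl, two_mul]

theorem SimpleGraph.Subgraph.IsPerfectMatching.exists_involutive_adj {G : SimpleGraph V}
    {M : G.Subgraph} (hM : M.IsPerfectMatching) :
    ∃ f : V → V, Function.Involutive f ∧ ∀ x, G.Adj x (f x) := by
  choose f hf huniq using Subgraph.isPerfectMatching_iff.mp hM
  exact ⟨f, fun x => (huniq (f x) x (hf x).symm).symm, fun x => M.adj_sub (hf x)⟩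

namespace SimpleGraph.IsTree

variable {T : SimpleGraph V}

theorem eq_of_adj_of_dist_lt (hT : T.IsTree) {r u z₁ z₂ : V} (h₁ : T.Adj z₁ u) (h₂ : T.Adj z₂ u)
    (d₁ : T.dist r z₁ < T.dist r u) (d₂ : T.dist r z₂ < T.dist r u) : z₁ = z₂ := by
  classical
  -- A shortest path to a nearer neighbour of `u` avoids `u`, so it extends to the path to `u`.
  have extend : ∀ z (h : T.Adj z u), T.dist r z < T.dist r u →
      ∃ q : T.Walk r z, (q.concat h).IsPath := by
    intro z h hd
    obtain ⟨q, hq, hlen⟩ := (hT.connected r z).exists_path_of_dist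
    refine ⟨q, hq.concat (fun hu => ?_) h⟩
    have := T.dist_le (q.takeUntil u hu)
    have := q.length_takeUntil_le_length hu
    omega
  obtain ⟨q₁, hq₁⟩ := extend z₁ h₁ d₁
  obtain ⟨q₂, hq₂⟩ := extend z₂ h₂ d₂
  simpa using congrArg Walk.penultimate ((hT.existsUnique_path r u).unique hq₁ hq₂)

theorem dist_lt_of_adj_of_ne (hT : T.IsTree) {r y z x : V} (hz : T.Adj z y)
    (hzd : T.dist r z < T.dist r y) (hx : T.Adj x y) (hxz : x ≠ z) :
    T.dist r y < T.dist r x := by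
  rcases hT.dist_eq_dist_add_one_of_adj r hx with h | h
  · omega
  · exact absurd (hT.eq_of_adj_of_dist_lt hx hz (by omega) hzd) hxz

variable {f : V → V}

theorem dist_lt_partner_of_adj (hT : T.IsTree) (hf : Function.Involutive f)
    (hadj : ∀ x, T.Adj x (f x)) {r x y : V} (hy : T.dist r (f y) < T.dist r y)
    (hxy : T.Adj x y) (hx : x ≠ f y) :
    T.dist r y < T.dist r x ∧ T.dist r x < T.dist r (f x) := by
  have hyx : T.dist r y < T.dist r x := hT.dist_lt_of_adj_of_ne (hadj y).symm hy hxy hx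
  refine ⟨hyx, ?_⟩
  rcases hT.dist_eq_dist_add_one_of_adj r (hadj x) with h | h
  · have := hT.dist_lt_of_adj_of_ne (r := r) (hadj x).symm (by omega) hxy.symm
      fun e => hx (by rw [e, hf x])
    omega
  · omega

theorem exists_le_getElem_eq_of_adj (hT : T.IsTree) (hf : Function.Involutive f)
    (hadj : ∀ x, T.Adj x (f x)) {r : V} {l : List V}
    (hmem : ∀ x, x ∈ l ↔ T.dist r x < T.dist r (f x))
    (hsorted : l.Pairwise fun a b => T.dist r b ≤ T.dist r a) {i : ℕ} (hi : i < l.length)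
    {x : V} (hx : T.Adj x (f l[i])) : ∃ j ≤ i, ∃ hj : j < l.length, l[j] = x := by
  by_cases hxi : x = l[i]
  · exact ⟨i, le_rfl, hi, hxi.symm⟩
  have hupper := (hmem _).mp (l.getElem_mem hi)
  obtain ⟨hix, hxup⟩ := hT.dist_lt_partner_of_adj hf hadj (y := f l[i]) (by rwa [hf]) hx
    (by rwa [hf])
  obtain ⟨j, hj, rfl⟩ := List.mem_iff_getElem.mp ((hmem x).mpr hxup)
  refine ⟨j, not_lt.mp fun hij => ?_, hj, rfl⟩
  have := List.pairwise_iff_getElem.mp hsorted i j hi hj hij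
  omega

theorem exists_leafSchedule [Fintype V] (hT : T.IsTree) (hf : Function.Involutive f)
    (hadj : ∀ x, T.Adj x (f x)) (r : V) :
    ∃ m, ∃ S : LeafSchedule T m, Fintype.card V = 2 * m ∧ 0 < m ∧ S.support (m - 1) = r := by
  have hne : ∀ x, T.dist r x ≠ T.dist r (f x) := fun x => hT.dist_ne_of_adj r (hadj x)
  obtain ⟨l, hnodup, hmem, hlen, hsorted⟩ :=
    (univ.filter fun x => T.dist r x < T.dist r (f x)).exists_nodup_pairwise_ge (T.dist r)
  simp only [mem_filter, mem_univ, true_and] at hmem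
  have hleaf : ∀ x ∈ l, f x ∉ l := fun x hx hfx => by
    have := (hmem x).mp hx
    have := (hmem _).mp hfx
    rw [hf x] at this
    omega
  obtain ⟨S, hS⟩ := LeafSchedule.exists_of_list hf.injective r hnodup hleaf
    fun i hi x hx => hT.exists_le_getElem_eq_of_adj hf hadj hmem hsorted hi hx
  have hr : r ∈ l := (hmem r).mpr (by have := hne r; rw [dist_self] at this ⊢; omega)
  refine ⟨l.length, S, hlen ▸ Fintype.card_eq_two_mul_card_filter_lt hf hne,
    List.length_pos_of_mem hr, ?_⟩
  obtain ⟨j, hj, hjr⟩ := List.mem_iff_getElem.mp hr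
  have hlast : l.length - 1 < l.length := by omega
  rw [hS _ hlast]
  rcases (show j ≤ l.length - 1 by omega).lt_or_eq with hjl | rfl
  · have := List.pairwise_iff_getElem.mp hsorted j _ hj hlast hjl
    rw [hjr, dist_self, Nat.le_zero] at this
    exact (hT.connected.dist_eq_zero_iff.mp this).symm
  · exact hjr

end SimpleGraph.IsTree

/-- If `T` is a finite tree admitting a perfect matching and `v ∈ V(T)`, then Staller has a
strategy `σ` for the S-game of the Maker-Breaker domination game on `T` (given the history
of the game, `σ` selects a not-yet-selected vertex) such that the following holds for every
play `p 0, p 1, p 2, …` consistent with `σ`, where Staller selects the even-indexed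
vertices `p 0, p 2, …` and Dominator the odd-indexed ones `p 1, p 3, …`, all selected
vertices being distinct: if `k` is such that Dominator's first `k` selections are the first
of his selections to form a dominating set of `T`, then `k ≥ n(T)/2` (so Dominator must
select at least `n(T)/2` vertices), and the last vertex selected by Staller up to that
point, namely her `k`-th move `p (2*(k-1))`, is `v`. -/
theorem staller_strategy_on_tree_with_perfect_matching [Fintype V] [DecidableEq V]
    (T : SimpleGraph V) (hT : T.IsTree)
    (hpm : ∃ M : T.Subgraph, M.IsPerfectMatching) (v : V) :
    ∃ σ : List V → V,
      (∀ h : List V, h.toFinset ≠ Finset.univ → σ h ∉ h) ∧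
      ∀ p : ℕ → V, Set.InjOn p (Set.Iio (Fintype.card V)) →
        (∀ i : ℕ, 2 * i < Fintype.card V → p (2 * i) = σ ((List.range (2 * i)).map p)) →
        ∀ k : ℕ, 2 * k ≤ Fintype.card V →
          Dominates T ∅ ((Finset.range k).image fun i => p (2 * i + 1)) →
          (∀ j, j < k →
            ¬ Dominates T ∅ ((Finset.range j).image fun i => p (2 * i + 1))) →
          Fintype.card V ≤ 2 * k ∧ p (2 * (k - 1)) = v := by
  obtain ⟨M, hM⟩ := hpm
  obtain ⟨f, hf, hadj⟩ := hM.exists_involutive_adj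
  obtain ⟨m, S, hcard, hm, hlast⟩ := hT.exists_leafSchedule hf hadj v
  refine ⟨S.strategy, fun _ => S.strategy_notMem, fun p hp hσ k hk hdom _ => ?_⟩
  have hkm : k ≤ m := by omega
  have hfollow := S.stallerMove_eq_support_of_dominates hp hσ hk hkm hdom
  obtain rfl := S.eq_of_dominates hp hk hkm hdom hfollow
  exact ⟨hcard.le, by rw [hfollow _ (by omega), hlast]⟩
end

section
/- Let G be a finite simple graph, R(G) a residual graph of G, and H = G − V(R(G)). Then γ_MB'(G) = n(H)/2 + γ_MB'(R(G)), with the convention that the right-hand side is ∞ when γ_MB'(R(G)) = ∞. -/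
/-!
If `x` is a leaf of `G` with neighbour `y`, then `γ_MB'(G) = 1 + γ_MB'(G - x - y)`.
Staller may open on `y`; Dominator must answer on `x`, for otherwise Staller takes `x` as well
and `x` can never be dominated, and from then on the game is the S-game on `G - x - y`.
Conversely, Dominator answers a move on `x` or `y` with the other vertex of the pair and
otherwise follows an optimal strategy on `G - x - y`. Each removal of a pendant `P₂` removes
such a pair, so `γ_MB'` drops by one with every two vertices removed.
-/

variable {V : Type*}

open Finset

theorem Finset.union_ne_univ_iff_exists {α : Type*} [Fintype α] [DecidableEq α]
    {s t : Finset α} : s ∪ t ≠ univ ↔ ∃ a, a ∉ s ∧ a ∉ t := by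
  simp [Finset.eq_univ_iff_forall]

section Game

variable {W : Type*} [Fintype W] [DecidableEq W] {G : SimpleGraph W} {A : Set W}
  {t : Bool} {k : ℕ} {D S : Finset W}

theorem not_mbWin_of_closedNbhd_subset (v : W) (hv : v ∉ A)
    (hN : ∀ u, u = v ∨ G.Adj u v → u ∈ S ∧ u ∉ D) : ¬ MBWin G A t k D S := by
  intro h
  induction h with
  | win t k D S hd =>
    obtain ⟨u, huD, hu⟩ := hd v hv
    exact (hN u hu).2 huD
  | dmove k D S w hwD hwS _ ih =>
    refine ih fun u hu => ⟨(hN u hu).1, fun huD => ?_⟩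
    rcases mem_insert.1 huD with rfl | huD
    exacts [hwS (hN u hu).1, (hN u hu).2 huD]
  | smove k D S hne _ ih =>
    obtain ⟨w, hwD, hwS⟩ := union_ne_univ_iff_exists.1 hne
    exact ih w hwD hwS fun u hu => ⟨mem_insert_of_mem (hN u hu).1, (hN u hu).2⟩

theorem MBWin.map {W' : Type*} [Fintype W'] [DecidableEq W'] {G' : SimpleGraph W'}
    (e : G ≃g G') (h : MBWin G A t k D S) :
    MBWin G' (e '' A) t k (D.map e.toEquiv.toEmbedding) (S.map e.toEquiv.toEmbedding) := by
  induction h with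
  | win t k D S hd =>
    refine .win _ _ _ _ fun v hv => ?_
    obtain ⟨u, hu, huv⟩ := hd (e.symm v) fun h => hv ⟨_, h, e.apply_symm_apply v⟩
    refine ⟨e u, mem_map_of_mem _ hu, ?_⟩
    rw [← e.apply_symm_apply v]
    exact huv.imp (congrArg e) e.map_adj_iff.2
  | dmove k D S v hvD hvS _ ih =>
    refine .dmove k _ _ (e v) (mt (mem_map' _).1 hvD) (mt (mem_map' _).1 hvS) ?_
    simpa [map_insert] using ih
  | smove k D S hne _ ih =>
    refine .smove k _ _ ?_ fun v hvD hvS => ?_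
    · obtain ⟨w, hwD, hwS⟩ := union_ne_univ_iff_exists.1 hne
      exact union_ne_univ_iff_exists.2 ⟨e w, mt (mem_map' _).1 hwD, mt (mem_map' _).1 hwS⟩
    · simpa [map_insert] using ih (e.symm v) (mt mem_map_equiv.2 hvD) (mt mem_map_equiv.2 hvS)

theorem gammaMB'_congr {W' : Type*} [Fintype W'] [DecidableEq W'] {G' : SimpleGraph W'}
    (e : G ≃g G') : gammaMB' G = gammaMB' G' := by
  simp only [gammaMB', gammaMBRes']
  congr 3
  ext m
  exact ⟨fun h => by simpa using h.map e, fun h => by simpa using h.map e.symm⟩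

end Game

section LeafRemoval

variable {W U : Type*} {G : SimpleGraph W} {H : SimpleGraph U} {f : H ↪g G} {x y : W}

theorem mem_range_iff_of_range_eq_compl_pair (hf : Set.range f = {x, y}ᶜ) {v : W} :
    v ∈ Set.range f ↔ v ≠ x ∧ v ≠ y := by
  simp [hf]

theorem apply_ne_of_range_eq_compl_pair (hf : Set.range f = {x, y}ᶜ) (u : U) :
    f u ≠ x ∧ f u ≠ y :=
  (mem_range_iff_of_range_eq_compl_pair hf).1 ⟨u, rfl⟩

variable [DecidableEq W] {D₀ S₀ : Finset U}

theorem Dominates.insert_map (hd : Dominates H ∅ D₀) (hxy : G.Adj x y)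
    (hf : Set.range f = {x, y}ᶜ) {q : W} (hq : q = x ∨ q = y) :
    Dominates G ∅ (insert q (D₀.map f.toEmbedding)) := by
  intro v _
  by_cases hv : v = x ∨ v = y
  · refine ⟨q, mem_insert_self _ _, ?_⟩
    rcases hq with rfl | rfl <;> rcases hv with rfl | rfl <;> simp [hxy, hxy.symm]
  · obtain ⟨u, rfl⟩ := (mem_range_iff_of_range_eq_compl_pair hf).2 (not_or.1 hv)
    obtain ⟨u', hu', hu'u⟩ := hd u (Set.notMem_empty u)
    exact ⟨f u', mem_insert_of_mem (mem_map_of_mem _ hu'), hu'u.imp (congrArg f) f.map_adj_iff.2⟩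

theorem Dominates.of_insert_map (hx : ∀ w, G.Adj x w → w = y)
    (hf : Set.range f = {x, y}ᶜ) (hd : Dominates G ∅ (insert x (D₀.map f.toEmbedding))) :
    Dominates H ∅ D₀ := by
  intro u _
  have hu := apply_ne_of_range_eq_compl_pair hf u
  obtain ⟨v, hv, hvu⟩ := hd (f u) (Set.notMem_empty _)
  rcases mem_insert.1 hv with rfl | hv
  · exact (hvu.elim (fun h => hu.1 h.symm) fun h => hu.2 (hx _ h)).elim
  · obtain ⟨u', hu', rfl⟩ := mem_map.1 hv
    exact ⟨u', hu', hvu.imp (fun h => f.injective h) f.map_adj_iff.1⟩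

variable [Fintype W] [Fintype U] [DecidableEq U] {t : Bool} {k : ℕ}

theorem MBWin.lift_of_pair_claimed (hxy : G.Adj x y) (hf : Set.range f = {x, y}ᶜ)
    (h : MBWin H ∅ t k D₀ S₀) :
    MBWin G ∅ t k (insert y (D₀.map f.toEmbedding)) (insert x (S₀.map f.toEmbedding)) := by
  have hfxy := apply_ne_of_range_eq_compl_pair hf
  induction h with
  | win t k D₀ S₀ hd => exact .win _ _ _ _ (hd.insert_map hxy hf (Or.inr rfl))
  | dmove k D₀ S₀ u huD huS _ ih =>
    rw [map_insert, insert_comm] at ih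
    exact .dmove k _ _ (f u) (by simp [(hfxy u).2, huD]) (by simp [(hfxy u).1, huS]) ih
  | smove k D₀ S₀ hne _ ih =>
    refine .smove k _ _ ?_ fun v hvD hvS => ?_
    · obtain ⟨w, hwD, hwS⟩ := union_ne_univ_iff_exists.1 hne
      exact union_ne_univ_iff_exists.2
        ⟨f w, by simp [(hfxy w).2, hwD], by simp [(hfxy w).1, hwS]⟩
    · simp only [mem_insert, not_or] at hvD hvS
      obtain ⟨u, rfl⟩ := (mem_range_iff_of_range_eq_compl_pair hf).2 ⟨hvS.1, hvD.1⟩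
      have := ih u (mt (mem_map' _).2 hvD.2) (mt (mem_map' _).2 hvS.2)
      rwa [map_insert, insert_comm] at this

theorem MBWin.restrict_of_pair_claimed (hx : ∀ w, G.Adj x w → w = y)
    (hf : Set.range f = {x, y}ᶜ) {D S : Finset W} (h : MBWin G ∅ t k D S)
    (hD : D = insert x (D₀.map f.toEmbedding)) (hS : S = insert y (S₀.map f.toEmbedding)) :
    MBWin H ∅ t k D₀ S₀ := by
  have hfxy := apply_ne_of_range_eq_compl_pair hf
  induction h generalizing D₀ S₀ with
  | win t k D S hd =>
    subst hD
    exact .win _ _ _ _ (hd.of_insert_map hx hf)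
  | dmove k D S v hvD hvS _ ih =>
    subst hD hS
    simp only [mem_insert, not_or] at hvD hvS
    obtain ⟨u, rfl⟩ := (mem_range_iff_of_range_eq_compl_pair hf).2 ⟨hvD.1, hvS.1⟩
    refine .dmove k _ _ u (mt (mem_map' _).2 hvD.2) (mt (mem_map' _).2 hvS.2) (ih ?_ rfl)
    rw [map_insert, insert_comm]
    rfl
  | smove k D S hne _ ih =>
    subst hD hS
    refine .smove k _ _ ?_ fun u huD huS =>
      ih (f u) (by simp [(hfxy u).1, huD]) (by simp [(hfxy u).2, huS]) rfl
        (by rw [map_insert, insert_comm]; rfl)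
    obtain ⟨v, hvD, hvS⟩ := union_ne_univ_iff_exists.1 hne
    simp only [mem_insert, not_or] at hvD hvS
    obtain ⟨u, rfl⟩ := (mem_range_iff_of_range_eq_compl_pair hf).2 ⟨hvD.1, hvS.1⟩
    exact union_ne_univ_iff_exists.2 ⟨u, mt (mem_map' _).2 hvD.2, mt (mem_map' _).2 hvS.2⟩

/-- The extra move is needed when `H` is dominated before Staller has touched `{x, y}`. -/
theorem MBWin.lift (hxy : G.Adj x y) (hf : Set.range f = {x, y}ᶜ) (h : MBWin H ∅ t k D₀ S₀) :
    MBWin G ∅ t (k + 1) (D₀.map f.toEmbedding) (S₀.map f.toEmbedding) := by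
  have hfxy := apply_ne_of_range_eq_compl_pair hf
  have hfree : ∀ D S : Finset U, D.map f.toEmbedding ∪ S.map f.toEmbedding ≠ univ := fun D S =>
    union_ne_univ_iff_exists.2 ⟨x, by simp [hfxy], by simp [hfxy]⟩
  induction h with
  | win t k D₀ S₀ hd =>
    cases t with
    | true =>
      exact .dmove k _ _ y (by simp [hfxy]) (by simp [hfxy])
        (.win _ _ _ _ (hd.insert_map hxy hf (Or.inr rfl)))
    | false =>
      refine .smove _ _ _ (hfree D₀ S₀) fun v _ hvS => ?_
      by_cases hvy : v = y
      · subst hvy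
        exact .dmove k _ _ x (by simp [hfxy]) (by simp [hfxy, hxy.ne])
          (.win _ _ _ _ (hd.insert_map hxy hf (Or.inl rfl)))
      · exact .dmove k _ _ y (by simp [hfxy]) (by simp [hfxy, Ne.symm hvy])
          (.win _ _ _ _ (hd.insert_map hxy hf (Or.inr rfl)))
  | dmove k D₀ S₀ u huD huS _ ih =>
    rw [map_insert] at ih
    exact .dmove (k + 1) _ _ (f u) (mt (mem_map' _).1 huD) (mt (mem_map' _).1 huS) ih
  | smove k D₀ S₀ hne hbr ih =>
    have hwin : MBWin H ∅ false k D₀ S₀ := .smove k D₀ S₀ hne hbr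
    refine .smove _ _ _ (hfree D₀ S₀) fun v hvD hvS => ?_
    by_cases hvx : v = x
    · subst hvx
      exact .dmove k _ _ y (by simp [hfxy]) (by simp [hfxy, hxy.ne'])
        (hwin.lift_of_pair_claimed hxy hf)
    by_cases hvy : v = y
    · subst hvy
      exact .dmove k _ _ x (by simp [hfxy]) (by simp [hfxy, hxy.ne])
        (hwin.lift_of_pair_claimed hxy.symm (by rw [hf, Set.pair_comm]))
    obtain ⟨u, rfl⟩ := (mem_range_iff_of_range_eq_compl_pair hf).2 ⟨hvx, hvy⟩
    have := ih u (mt (mem_map' _).2 hvD) (mt (mem_map' _).2 hvS)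
    rwa [map_insert] at this

theorem MBWin.exists_restrict_of_leaf (hxy : G.Adj x y) (hx : ∀ w, G.Adj x w → w = y)
    (hf : Set.range f = {x, y}ᶜ) {m : ℕ} (h : MBWin G ∅ false m ∅ ∅) :
    ∃ k, m = k + 1 ∧ MBWin H ∅ false k ∅ ∅ := by
  have hNx : ∀ u, u = x ∨ G.Adj u x → u = x ∨ u = y := fun u hu =>
    hu.imp_right fun h => hx u h.symm
  have hund : ∀ D : Finset W, x ∉ D → y ∉ D → ¬ Dominates G ∅ D := fun D hxD hyD hd => by
    obtain ⟨u, huD, hu⟩ := hd x (Set.notMem_empty x)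
    rcases hNx u hu with rfl | rfl
    exacts [hxD huD, hyD huD]
  cases h with
  | win _ _ _ _ hd => exact (hund ∅ (notMem_empty x) (notMem_empty y) hd).elim
  | smove _ _ _ _ hbr => ?_
  cases hbr y (notMem_empty y) (notMem_empty y) with
  | win _ _ _ _ hd => exact (hund ∅ (notMem_empty x) (notMem_empty y) hd).elim
  | dmove k _ _ v _ hvS hwin => ?_
  refine ⟨k, rfl, ?_⟩
  have hvy : v ≠ y := by simpa using hvS
  by_cases hvx : v = x
  · subst hvx
    exact hwin.restrict_of_pair_claimed hx hf (by simp) (by simp)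
  cases hwin with
  | win _ _ _ _ hd =>
    exact (hund _ (by simpa using Ne.symm hvx) (by simpa using Ne.symm hvy) hd).elim
  | smove _ _ _ _ hbr' => ?_
  refine (not_mbWin_of_closedNbhd_subset x (Set.notMem_empty x) (fun u hu => ?_)
    (hbr' x (by simpa using Ne.symm hvx) (by simpa using hxy.ne))).elim
  rcases hNx u hu with rfl | rfl
  · simp [Ne.symm hvx]
  · simp [Ne.symm hvy]

theorem gammaMB'_eq_one_add_of_leaf (hxy : G.Adj x y) (hx : ∀ w, G.Adj x w → w = y)
    (hf : Set.range f = {x, y}ᶜ) : gammaMB' G = 1 + gammaMB' H := by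
  simp only [gammaMB', gammaMBRes', sInf_image, ENat.add_iInf₂]
  refine le_antisymm (le_iInf₂ fun k hk => ?_) (le_iInf₂ fun m hm => ?_)
  · have hk' : MBWin G ∅ false (k + 1) ∅ ∅ := by simpa using hk.lift hxy hf
    exact (iInf₂_le (k + 1) hk').trans_eq (by push_cast; ring)
  · obtain ⟨k, rfl, hk⟩ := hm.exists_restrict_of_leaf hxy hx hf
    exact (iInf₂_le k hk).trans_eq (by push_cast; ring)

end LeafRemoval

section Residual

variable [DecidableEq V] {G : SimpleGraph V} {a b : Finset V}

theorem PendantStep.exists_leaf (h : PendantStep G a b) :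
    ∃ x ∈ a, ∃ y ∈ a, G.Adj x y ∧ (∀ w ∈ a, G.Adj x w → w = y) ∧ b = (a.erase x).erase y := by
  rcases h with ⟨x, hx, y, hy, hxy, hleaf, -, rfl⟩ | ⟨x, hx, y, hy, hxy, rfl, rfl⟩
  · exact ⟨x, hx, y, hy, hxy, hleaf, rfl⟩
  · refine ⟨x, hx, y, hy, hxy, fun w hw hxw => ?_, ?_⟩
    · simpa [hxw.ne'] using hw
    · ext w
      simp only [mem_erase, mem_insert, mem_singleton, notMem_empty, false_iff]
      tauto

theorem PendantStep.card_eq (h : PendantStep G a b) : a.card = b.card + 2 := by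
  obtain ⟨x, hx, y, hy, hxy, -, rfl⟩ := h.exists_leaf
  have hy' : y ∈ a.erase x := mem_erase.2 ⟨hxy.ne', hy⟩
  rw [card_erase_of_mem hy', card_erase_of_mem hx]
  have : 1 < a.card := one_lt_card.2 ⟨x, hx, y, hy, hxy.ne⟩
  omega

theorem PendantStep.gammaMB'_induce_eq (h : PendantStep G a b) :
    gammaMB' (G.induce (a : Set V)) = 1 + gammaMB' (G.induce (b : Set V)) := by
  obtain ⟨x, hx, y, hy, hxy, hleaf, rfl⟩ := h.exists_leaf
  have hsub : (((a.erase x).erase y : Finset V) : Set V) ⊆ a := fun w hw =>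
    mem_of_mem_erase (mem_of_mem_erase hw)
  refine gammaMB'_eq_one_add_of_leaf (x := ⟨x, hx⟩) (y := ⟨y, hy⟩)
    (f := G.induceHomOfLE hsub) hxy (fun w hw => Subtype.ext (hleaf w w.2 hw)) ?_
  change Set.range (Set.inclusion hsub) = _
  ext w
  simp [Subtype.ext_iff, and_comm]

theorem exists_gammaMB'_induce_eq_of_reflTransGen
    (h : Relation.ReflTransGen (PendantStep G) a b) :
    ∃ n : ℕ, a.card = b.card + 2 * n ∧
      gammaMB' (G.induce (a : Set V)) = n + gammaMB' (G.induce (b : Set V)) := by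
  induction h with
  | refl => exact ⟨0, rfl, by simp⟩
  | tail _ hstep ih =>
    obtain ⟨n, hcard, hγ⟩ := ih
    refine ⟨n + 1, by rw [hcard, hstep.card_eq]; ring, ?_⟩
    rw [hγ, hstep.gammaMB'_induce_eq]
    push_cast
    ring

end Residual

/-- Let `G` be a finite simple graph, `R(G)` a residual graph of `G`, and
`H = G − V(R(G))`.  Then `γ_MB'(G) = n(H)/2 + γ_MB'(R(G))` (the right-hand side being
`∞` when `γ_MB'(R(G)) = ∞`). -/
theorem gammaMB'_eq_of_residual [Fintype V] [DecidableEq V] (G : SimpleGraph V)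
    (s : Finset V) (hs : IsResidualSet G s) :
    gammaMB' G =
      (((Fintype.card V - s.card) / 2 : ℕ) : ℕ∞) + gammaMB' (G.induce (↑s : Set V)) := by
  obtain ⟨n, hcard, hγ⟩ := exists_gammaMB'_induce_eq_of_reflTransGen hs.1
  have hdiv : (Fintype.card V - s.card) / 2 = n := by
    rw [← card_univ, hcard]
    omega
  have huniv : G.induce ((univ : Finset V) : Set V) ≃g G :=
    ⟨Equiv.subtypeUnivEquiv fun v => mem_coe.2 (mem_univ v), Iff.rfl⟩
  rw [← gammaMB'_congr huniv, hγ, hdiv]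
end
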